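/- arXiv:1707.01622 — 6 statements merged into one kernel-verified Lean document; each statement's English description precedes it below -/
import Mathlib

section
/- For every integer n ≥ 1, the limit as x → ∞ of (∑_{m=1}^{⌊x⌋} (log m)^n / m − (log x)^{n+1}/(n+1)) exists. -/
open Filter Real

/-!
For `f` eventually antitone with `f → 0` and `F' = f`, the mean value theorem puts each increment
`F (N + 1) - F N` between `f (N + 1)` and `f N`. Hence `∑_{m ≤ N} f m - F N` is eventually
antitone while `∑_{m ≤ N} f m - F N - f N` is eventually monotone, so the former converges, and
passing from `N = ⌊x⌋` to real `x` costs at most `f ⌊x⌋ → 0`. The theorem is the case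
`f t = (log t)^n / t`, `F t = (log t)^{n+1} / (n + 1)`, where `f` is antitone on `[e^n, ∞)`
because `(log t)^n / t = (log t / t^{1/n})^n` for `n ≥ 1`.
-/

open Set Topology

noncomputable def sumSubAntideriv (f F : ℝ → ℝ) (N : ℕ) : ℝ :=
  ∑ m ∈ Finset.Icc 1 N, f m - F N

section AntitoneOn

variable {f F : ℝ → ℝ} {a : ℝ}

lemma AntitoneOn.nonneg_of_tendsto_zero (hf : AntitoneOn f (Ici a))
    (hf0 : Tendsto f atTop (𝓝 0)) {x : ℝ} (hx : a ≤ x) : 0 ≤ f x :=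
  le_of_tendsto hf0 (eventually_atTop.2 ⟨x, fun _ hy => hf hx (hx.trans hy) hy⟩)

lemma AntitoneOn.mul_sub_le_sub_le_mul_sub (hf : AntitoneOn f (Ici a))
    (hF : ∀ x ∈ Ici a, HasDerivAt F (f x) x) {s t : ℝ} (hs : a ≤ s) (hst : s ≤ t) :
    f t * (t - s) ≤ F t - F s ∧ F t - F s ≤ f s * (t - s) := by
  rcases hst.eq_or_lt with rfl | hlt
  · simp
  have hIcc : Icc s t ⊆ Ici a := fun x hx => hs.trans hx.1
  obtain ⟨c, ⟨hsc, hct⟩, hc⟩ := exists_hasDerivAt_eq_slope F f hlt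
    (fun x hx => (hF x (hIcc hx)).continuousAt.continuousWithinAt)
    (fun x hx => hF x (hIcc (Ioo_subset_Icc_self hx)))
  have hincr : F t - F s = f c * (t - s) := by
    rw [hc, div_mul_cancel₀ _ (sub_pos.2 hlt).ne']
  have hts : 0 ≤ t - s := sub_nonneg.2 hst
  rw [hincr]
  exact ⟨mul_le_mul_of_nonneg_right (hf (hs.trans hsc.le) (hs.trans hst) hct.le) hts,
    mul_le_mul_of_nonneg_right (hf hs (hs.trans hsc.le) hsc.le) hts⟩

lemma AntitoneOn.sumSubAntideriv_succ_bounds (hf : AntitoneOn f (Ici a))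
    (hF : ∀ x ∈ Ici a, HasDerivAt F (f x) x) {N : ℕ} (hN : a ≤ N) :
    sumSubAntideriv f F (N + 1) ≤ sumSubAntideriv f F N ∧
      sumSubAntideriv f F N - f N ≤ sumSubAntideriv f F (N + 1) - f ↑(N + 1) := by
  have hsucc : sumSubAntideriv f F (N + 1) =
      sumSubAntideriv f F N + f (N + 1) - (F (N + 1) - F N) := by
    simp only [sumSubAntideriv, Finset.sum_Icc_succ_top (Nat.le_add_left 1 N)]
    push_cast
    ring
  have hincr := hf.mul_sub_le_sub_le_mul_sub hF hN (le_add_of_nonneg_right zero_le_one)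
  simp only [add_sub_cancel_left, mul_one] at hincr
  push_cast
  constructor <;> linarith

lemma AntitoneOn.tendsto_sumSubAntideriv (hf : AntitoneOn f (Ici a))
    (hf0 : Tendsto f atTop (𝓝 0)) (hF : ∀ x ∈ Ici a, HasDerivAt F (f x) x) :
    ∃ L, Tendsto (sumSubAntideriv f F) atTop (𝓝 L) := by
  set N₀ := ⌈a⌉₊
  have hN : ∀ k : ℕ, a ≤ ((k + N₀ : ℕ) : ℝ) := fun k =>
    (Nat.le_ceil a).trans (by exact_mod_cast Nat.le_add_left N₀ k)
  set u : ℕ → ℝ := fun k => sumSubAntideriv f F (k + N₀)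
  have hu_anti : Antitone u := antitone_nat_of_succ_le fun k => by
    simpa only [u, Nat.succ_add] using (hf.sumSubAntideriv_succ_bounds hF (hN k)).1
  have hu_mono : Monotone fun k => u k - f (k + N₀ : ℕ) := monotone_nat_of_le_succ fun k => by
    simpa only [u, Nat.succ_add] using (hf.sumSubAntideriv_succ_bounds hF (hN k)).2
  have hu_bdd : BddBelow (range u) := by
    refine ⟨u 0 - f (0 + N₀ : ℕ), forall_mem_range.2 fun k => ?_⟩
    linarith [hu_mono (Nat.zero_le k), hf.nonneg_of_tendsto_zero hf0 (hN k)]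
  exact ⟨_, (tendsto_add_atTop_iff_nat N₀).1 (tendsto_atTop_ciInf hu_anti hu_bdd)⟩

lemma AntitoneOn.tendsto_sub_floor (hf : AntitoneOn f (Ici a))
    (hf0 : Tendsto f atTop (𝓝 0)) (hF : ∀ x ∈ Ici a, HasDerivAt F (f x) x) :
    Tendsto (fun x => F x - F ⌊x⌋₊) atTop (𝓝 0) := by
  have hfloor : Tendsto (fun x : ℝ => f ⌊x⌋₊) atTop (𝓝 0) :=
    hf0.comp (tendsto_natCast_atTop_atTop.comp tendsto_nat_floor_atTop)
  have hbounds : ∀ᶠ x : ℝ in atTop, 0 ≤ F x - F ⌊x⌋₊ ∧ F x - F ⌊x⌋₊ ≤ f ⌊x⌋₊ := by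
    filter_upwards [eventually_ge_atTop (⌈a⌉₊ : ℝ)] with x hx
    have hx0 : 0 ≤ x := (Nat.cast_nonneg _).trans hx
    have ha : a ≤ ⌊x⌋₊ := (Nat.le_ceil a).trans (by exact_mod_cast Nat.le_floor hx)
    have hfrac : 0 ≤ x - ⌊x⌋₊ ∧ x - ⌊x⌋₊ ≤ 1 :=
      ⟨sub_nonneg.2 (Nat.floor_le hx0), by linarith [Nat.lt_floor_add_one x]⟩
    have hincr := hf.mul_sub_le_sub_le_mul_sub hF ha (Nat.floor_le hx0)
    have hfx : 0 ≤ f x := hf.nonneg_of_tendsto_zero hf0 (ha.trans (Nat.floor_le hx0))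
    have hffloor : 0 ≤ f ⌊x⌋₊ := hf.nonneg_of_tendsto_zero hf0 ha
    exact ⟨(mul_nonneg hfx hfrac.1).trans hincr.1,
      hincr.2.trans (mul_le_of_le_one_right hffloor hfrac.2)⟩
  exact tendsto_of_tendsto_of_tendsto_of_le_of_le' tendsto_const_nhds hfloor
    (hbounds.mono fun _ => And.left) (hbounds.mono fun _ => And.right)

theorem AntitoneOn.exists_tendsto_sum_Icc_floor_sub (hf : AntitoneOn f (Ici a))
    (hf0 : Tendsto f atTop (𝓝 0)) (hF : ∀ x ∈ Ici a, HasDerivAt F (f x) x) :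
    ∃ L, Tendsto (fun x : ℝ => ∑ m ∈ Finset.Icc 1 ⌊x⌋₊, f m - F x) atTop (𝓝 L) := by
  obtain ⟨L, hL⟩ := hf.tendsto_sumSubAntideriv hf0 hF
  have h := (hL.comp tendsto_nat_floor_atTop).sub (hf.tendsto_sub_floor hf0 hF)
  rw [sub_zero] at h
  exact ⟨L, h.congr fun x => sub_sub_sub_cancel_right _ _ _⟩

end AntitoneOn

lemma Real.antitoneOn_log_pow_div_self (n : ℕ) :
    AntitoneOn (fun t => log t ^ n / t) (Ici (exp n)) := by
  rcases eq_or_ne n 0 with rfl | hn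
  · intro x hx y _ hxy
    simp only [Nat.cast_zero, exp_zero, mem_Ici] at hx
    simpa only [pow_zero, one_div] using inv_anti₀ (zero_lt_one.trans_le hx) hxy
  have hroot : ∀ t ∈ Ici (exp n), log t ^ n / t = (log t / t ^ (n⁻¹ : ℝ)) ^ n := fun t ht => by
    rw [div_pow, rpow_inv_natCast_pow ((exp_pos _).le.trans ht) hn]
  have hexp : Ici (exp n) = Ici (exp (n⁻¹ : ℝ)⁻¹) := by rw [inv_inv]
  intro x hx y hy hxy
  have hy1 : 1 ≤ y := (one_le_exp (Nat.cast_nonneg n)).trans hy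
  simp only [hroot x hx, hroot y hy]
  refine pow_le_pow_left₀ (div_nonneg (log_nonneg hy1) (rpow_nonneg (by linarith) _)) ?_ n
  rw [hexp] at hx hy
  exact log_div_self_rpow_antitoneOn (by positivity) hx hy hxy

lemma Real.hasDerivAt_log_pow_succ_div (n : ℕ) {x : ℝ} (hx : 0 < x) :
    HasDerivAt (fun t => log t ^ (n + 1) / (n + 1)) (log x ^ n / x) x := by
  have h : HasDerivAt (fun t => log t ^ (n + 1) / (n + 1))
      ((n + 1 : ℕ) * log x ^ n * x⁻¹ / (n + 1)) x :=
    ((hasDerivAt_log hx.ne').pow (n + 1)).div_const _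
  convert h using 1
  push_cast
  field_simp

theorem stieltjes_limit_exists_general (n : ℕ) :
    ∃ L : ℝ, Tendsto
      (fun x : ℝ => (∑ m ∈ Finset.Icc 1 ⌊x⌋₊, (Real.log m) ^ n / (m : ℝ))
        - (Real.log x) ^ (n + 1) / (n + 1)) atTop (nhds L) :=
  (antitoneOn_log_pow_div_self n).exists_tendsto_sum_Icc_floor_sub
    isLittleO_pow_log_id_atTop.tendsto_div_nhds_zero
    fun _ hx => hasDerivAt_log_pow_succ_div n ((exp_pos _).trans_le hx)

/-- For every integer `n ≥ 1`, the limit as `x → ∞` of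
`∑_{m=1}^{⌊x⌋} (log m)^n / m − (log x)^{n+1}/(n+1)` exists. -/
theorem stieltjes_limit_exists (n : ℕ) (hn : 1 ≤ n) :
    ∃ L : ℝ, Tendsto
      (fun x : ℝ => (∑ m ∈ Finset.Icc 1 ⌊x⌋₊, (Real.log m) ^ n / (m : ℝ))
        - (Real.log x) ^ (n + 1) / (n + 1)) atTop (nhds L) :=
  stieltjes_limit_exists_general n
end

section
/- Infinitely many of the Stieltjes constants γ_n (coefficients in the Laurent expansion of ζ(s) at s = 1) are positive, and infinitely many are negative. -/
open Filter

open Real in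
/-- For real `t ≥ 1`, `‖ζ(1+t)‖ ≤ 2`. -/
lemma zeta_norm_le_two {t : ℝ} (ht : 1 ≤ t) : ‖riemannZeta (1 + (t : ℂ))‖ ≤ 2 := by
  have hre : (1 + (t : ℂ)).re = 1 + t := by simp
  rw [zeta_eq_tsum_one_div_nat_add_one_cpow (by rw [hre]; linarith)]
  have hterm : ∀ n : ℕ, ‖1 / ((n : ℂ) + 1) ^ (1 + (t : ℂ))‖ = 1 / ((n : ℝ) + 1) ^ (1 + t) := by
    intro n
    have h1 : ((n : ℂ) + 1) = ((n + 1 : ℕ) : ℂ) := by push_cast; ring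
    rw [norm_div, norm_one, h1, Complex.norm_natCast_cpow_of_pos n.succ_pos]
    have : ((n + 1 : ℕ) : ℝ) = (n : ℝ) + 1 := by push_cast; ring
    rw [this, hre]
  have hsum2 : HasSum (fun n : ℕ => (1 : ℝ) / ((n : ℝ) + 1) ^ 2) (π ^ 2 / 6) := by
    have h1 := (hasSum_nat_add_iff' (f := fun n : ℕ => (1 : ℝ) / (n : ℝ) ^ 2) 1).mpr
      hasSum_zeta_two
    simpa using h1
  have hcomp : ∀ n : ℕ, (1 : ℝ) / ((n : ℝ) + 1) ^ (1 + t) ≤ 1 / ((n : ℝ) + 1) ^ 2 := by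
    intro n
    have hb : (1 : ℝ) ≤ (n : ℝ) + 1 := by
      have := Nat.cast_nonneg (α := ℝ) n; linarith
    apply one_div_le_one_div_of_le (by positivity)
    calc ((n : ℝ) + 1) ^ 2 = ((n : ℝ) + 1) ^ ((2 : ℕ) : ℝ) := by
          rw [Real.rpow_natCast]
      _ ≤ ((n : ℝ) + 1) ^ (1 + t) := by
          apply Real.rpow_le_rpow_of_exponent_le hb; push_cast; linarith
  have hle : ∀ n : ℕ, ‖1 / ((n : ℂ) + 1) ^ (1 + (t : ℂ))‖ ≤ 1 / ((n : ℝ) + 1) ^ 2 := by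
    intro n; rw [hterm n]; exact hcomp n
  have hs : Summable (fun n : ℕ => ‖1 / ((n : ℂ) + 1) ^ (1 + (t : ℂ))‖) :=
    Summable.of_nonneg_of_le (fun n => norm_nonneg _) hle hsum2.summable
  calc ‖∑' n : ℕ, 1 / ((n : ℂ) + 1) ^ (1 + (t : ℂ))‖
      ≤ ∑' n : ℕ, ‖1 / ((n : ℂ) + 1) ^ (1 + (t : ℂ))‖ := norm_tsum_le_tsum_norm hs
    _ ≤ ∑' n : ℕ, (1 : ℝ) / ((n : ℝ) + 1) ^ 2 := Summable.tsum_le_tsum hle hs hsum2.summable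
    _ = π ^ 2 / 6 := hsum2.tsum_eq
    _ ≤ 2 := by nlinarith [Real.pi_lt_d2, Real.pi_pos]

/-- Growth lemma: if a power series with values `F t` bounded above by `3` on `[1,∞)`
has a positive coefficient `c m` (`m ≥ 1`) with all later coefficients nonnegative,
we get a contradiction. -/
lemma growth_contradiction (c : ℕ → ℝ) (F : ℝ → ℝ)
    (hsum : ∀ t : ℝ, 1 ≤ t → HasSum (fun n => c n * t ^ n) (F t))
    (hb : ∀ t : ℝ, 1 ≤ t → F t ≤ 3)
    (m : ℕ) (hm1 : 1 ≤ m) (hm : 0 < c m) (hpos : ∀ n, m < n → 0 ≤ c n) : False := by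
  set C : ℝ := ∑ i ∈ Finset.range m, |c i| with hCdef
  have hC : 0 ≤ C := Finset.sum_nonneg fun i _ => abs_nonneg _
  set t : ℝ := max 1 ((C + 4) / c m) with htdef
  have ht1 : (1 : ℝ) ≤ t := le_max_left _ _
  have ht0 : (0 : ℝ) < t := lt_of_lt_of_le one_pos ht1
  have htc : C + 4 ≤ c m * t := by
    have h := le_max_right 1 ((C + 4) / c m)
    have := (div_le_iff₀ hm).mp h
    linarith
  have htail : HasSum (fun n => c (n + m) * t ^ (n + m))
      (F t - ∑ i ∈ Finset.range m, c i * t ^ i) :=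
    (hasSum_nat_add_iff' (f := fun n => c n * t ^ n) m).mpr (hsum t ht1)
  have h1 : c m * t ^ m ≤ F t - ∑ i ∈ Finset.range m, c i * t ^ i := by
    have := le_hasSum htail 0 (fun j hj =>
      mul_nonneg (hpos _ (by omega)) (pow_nonneg ht0.le _))
    simpa using this
  set u : ℝ := t ^ (m - 1) with hudef
  have hu : (1 : ℝ) ≤ u := one_le_pow₀ ht1
  have htm : t ^ m = u * t := by
    rw [hudef, ← pow_succ]; congr 1; omega
  have h2 : ∑ i ∈ Finset.range m, c i * t ^ i ≥ -(C * u) := by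
    have habs : |∑ i ∈ Finset.range m, c i * t ^ i| ≤ C * u := by
      calc |∑ i ∈ Finset.range m, c i * t ^ i|
          ≤ ∑ i ∈ Finset.range m, |c i * t ^ i| := Finset.abs_sum_le_sum_abs _ _
        _ ≤ ∑ i ∈ Finset.range m, |c i| * u := by
            apply Finset.sum_le_sum
            intro i hi
            have hi' := Finset.mem_range.mp hi
            rw [abs_mul, abs_pow, abs_of_pos ht0]
            exact mul_le_mul_of_nonneg_left
              (pow_le_pow_right₀ ht1 (by omega : i ≤ m - 1)) (abs_nonneg _)
        _ = C * u := by rw [← Finset.sum_mul]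
    linarith [neg_abs_le (∑ i ∈ Finset.range m, c i * t ^ i)]
  have hFt := hb t ht1
  -- F t ≥ c m * t^m + (sum) ≥ c m * u * t - C * u = u * (c m * t - C) ≥ u * 4 ≥ 4
  nlinarith [mul_le_mul_of_nonneg_left htc (by linarith : (0:ℝ) ≤ u)]

/-- If all coefficients from some point on are nonpositive, and some coefficient
with positive index is nonzero, we get a contradiction. -/
lemma eventually_nonpos_contradiction (c : ℕ → ℝ) (F : ℝ → ℝ)
    (hsum : ∀ t : ℝ, 1 ≤ t → HasSum (fun n => c n * t ^ n) (F t))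
    (hb : ∀ t : ℝ, 1 ≤ t → |F t| ≤ 3)
    (hnp : ∃ k, 1 ≤ k ∧ c k ≠ 0)
    (N : ℕ) (hN : ∀ n, N ≤ n → c n ≤ 0) : False := by
  classical
  have hb' : ∀ t : ℝ, 1 ≤ t → F t ≤ 3 := fun t ht => (abs_le.mp (hb t ht)).2
  have hbneg : ∀ t : ℝ, 1 ≤ t → -F t ≤ 3 := fun t ht => by
    have := (abs_le.mp (hb t ht)).1; linarith
  have hsumneg : ∀ t : ℝ, 1 ≤ t → HasSum (fun n => (-c n) * t ^ n) (-F t) := fun t ht => by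
    simpa [neg_mul] using (hsum t ht).neg
  by_cases hcase : ∃ m, max N 1 ≤ m ∧ c m ≠ 0
  · obtain ⟨m, hm, hmne⟩ := hcase
    have hmneg : c m < 0 := lt_of_le_of_ne (hN m (le_trans (le_max_left _ _) hm)) hmne
    exact growth_contradiction (fun n => -c n) (fun t => -F t) hsumneg hbneg
      m (le_trans (le_max_right _ _) hm) (neg_pos.mpr hmneg)
      (fun n hn => neg_nonneg.mpr (hN n (by omega)))
  · push_neg at hcase
    have hzero : ∀ n, max N 1 ≤ n → c n = 0 := fun n hn => hcase n hn
    obtain ⟨k, hk1, hkne⟩ := hnp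
    have hkM : k < max N 1 := by
      by_contra h
      exact hkne (hzero k (by omega))
    set M := max N 1 with hMdef
    set P : ℕ → Prop := fun n => 1 ≤ n ∧ c n ≠ 0 with hPdef
    set m := Nat.findGreatest P M with hmdef
    have hPm : P m := Nat.findGreatest_spec (P := P) (le_of_lt hkM) ⟨hk1, hkne⟩
    have hgt : ∀ n, m < n → c n = 0 := by
      intro n hn
      by_cases hnM : n ≤ M
      · have := Nat.findGreatest_is_greatest (P := P) (n := M) hn hnM
        by_contra hne
        exact this ⟨by omega, hne⟩
      · exact hzero n (by omega)
    rcases lt_or_gt_of_ne hPm.2 with hneg | hpos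
    · exact growth_contradiction (fun n => -c n) (fun t => -F t) hsumneg hbneg
        m hPm.1 (neg_pos.mpr hneg) (fun n hn => by show (0:ℝ) ≤ -c n; rw [hgt n hn]; simp)
    · exact growth_contradiction c F hsum hb' m hPm.1 hpos
        (fun n hn => by rw [hgt n hn])

/-- Infinitely many Stieltjes constants are positive and infinitely many are negative. -/
theorem stieltjes_sign_changes (γ : ℕ → ℝ)
    (hγ : ∀ s : ℂ, s ≠ 1 →
      HasSum (fun n : ℕ => (γ n : ℂ) * (s - 1) ^ n) (riemannZeta s - 1 / (s - 1))) :
    {n : ℕ | 0 < γ n}.Infinite ∧ {n : ℕ | γ n < 0}.Infinite := by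
  set F : ℝ → ℝ := fun t => (riemannZeta (1 + (t : ℂ)) - 1 / (t : ℂ)).re with hFdef
  have key : ∀ t : ℝ, 1 ≤ t → HasSum (fun n => γ n * t ^ n) (F t) := by
    intro t ht
    have hne : (1 + (t : ℂ)) ≠ 1 := by
      intro h
      have : (t : ℂ) = 0 := by linear_combination h
      have : t = 0 := by exact_mod_cast this
      linarith
    have h := hγ (1 + (t : ℂ)) hne
    have h' : HasSum (fun n : ℕ => ((γ n * t ^ n : ℝ) : ℂ))
        (riemannZeta (1 + (t : ℂ)) - 1 / (t : ℂ)) := by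
      have e1 : (1 + (t : ℂ)) - 1 = (t : ℂ) := by ring
      rw [e1] at h
      convert h using 2 with n
      push_cast
      ring
    have := h'.mapL Complex.reCLM
    simpa [hFdef, ← Complex.ofReal_pow] using this
  have hbd : ∀ t : ℝ, 1 ≤ t → |F t| ≤ 3 := by
    intro t ht
    have h1 : |F t| ≤ ‖riemannZeta (1 + (t : ℂ)) - 1 / (t : ℂ)‖ := Complex.abs_re_le_norm _
    have h2 : ‖riemannZeta (1 + (t : ℂ)) - 1 / (t : ℂ)‖ ≤
        ‖riemannZeta (1 + (t : ℂ))‖ + ‖1 / (t : ℂ)‖ := norm_sub_le _ _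
    have h3 : ‖(1 : ℂ) / (t : ℂ)‖ ≤ 1 := by
      rw [norm_div, norm_one, Complex.norm_real]
      rw [Real.norm_eq_abs, abs_of_pos (by linarith : (0:ℝ) < t)]
      rw [div_le_one (by linarith)]
      linarith
    have h4 := zeta_norm_le_two ht
    linarith
  have hnp : ∃ k, 1 ≤ k ∧ γ k ≠ 0 := by
    by_contra h0
    push_neg at h0
    have hz : ∀ s : ℂ, s ≠ 1 → riemannZeta s - 1 / (s - 1) = (γ 0 : ℂ) := by
      intro s hs
      have h := hγ s hs
      have h2 : HasSum (fun n : ℕ => (γ n : ℂ) * (s - 1) ^ n) ((γ 0 : ℂ)) := by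
        have hsing := hasSum_single (f := fun n : ℕ => (γ n : ℂ) * (s - 1) ^ n) 0
          (fun b hb => by have := h0 b (by omega); simp [this])
        simpa using hsing
      exact h.unique h2
    have e0 := hz 0 (by norm_num)
    have e2 := hz 2 (by norm_num)
    rw [riemannZeta_zero] at e0
    rw [riemannZeta_two] at e2
    have e3 : ((Real.pi : ℂ)) ^ 2 = 9 := by
      have h := e2.trans e0.symm
      norm_num at h
      linear_combination 6 * h
    have e4 : Real.pi ^ 2 = 9 := by exact_mod_cast e3
    nlinarith [Real.pi_gt_three]
  constructor
  · by_contra hfin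
    rw [Set.not_infinite] at hfin
    obtain ⟨N, hNb⟩ := hfin.bddAbove
    have hN : ∀ n, N + 1 ≤ n → γ n ≤ 0 := by
      intro n hn
      by_contra h
      push_neg at h
      have := hNb (Set.mem_setOf.mpr h)
      omega
    exact absurd (eventually_nonpos_contradiction γ F key hbd hnp (N + 1) hN) (by simp)
  · by_contra hfin
    rw [Set.not_infinite] at hfin
    obtain ⟨N, hNb⟩ := hfin.bddAbove
    have hN : ∀ n, N + 1 ≤ n → -γ n ≤ 0 := by
      intro n hn
      by_contra h
      push_neg at h
      have := hNb (Set.mem_setOf.mpr (by linarith : γ n < 0))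
      omega
    have hsumneg : ∀ t : ℝ, 1 ≤ t → HasSum (fun n => (-γ n) * t ^ n) (-F t) := fun t ht => by
      simpa [neg_mul] using (key t ht).neg
    have hbneg : ∀ t : ℝ, 1 ≤ t → |(-F t)| ≤ 3 := fun t ht => by
      rw [abs_neg]; exact hbd t ht
    obtain ⟨k, hk1, hkne⟩ := hnp
    exact absurd (eventually_nonpos_contradiction (fun n => -γ n) (fun t => -F t)
      hsumneg hbneg ⟨k, hk1, by simpa using hkne⟩ (N + 1) hN) (by simp)
end

section
/- Each of the four inequalities γ_{2n} > 0, γ_{2n} < 0, γ_{2n−1} > 0, γ_{2n−1} < 0 holds for infinitely many positive integers n, where γ_k are the Stieltjes constants of the Riemann zeta function. -/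
/-!
For real `x ≠ 0`, adding and subtracting the Laurent expansions at `s = 1 + x` and `s = 1 - x` gives
`∑ γ_{2m} (x²)^m = (ζ(1 + x) + ζ(1 - x)) / 2` and
`∑ γ_{2m+1} (x²)^m = (ζ(1 + x) - ζ(1 - x) - 2 / x) / (2x)`.
At the points `x = 2k + 3` the value `ζ(1 - x)` is a trivial zero while `ζ(1 + x) → 1`, so both
power series in `y = x²` stay bounded along a sequence `y → ∞`. A real power series whose
coefficients are eventually of one sign cannot do this unless it is constant: otherwise one of its
truncations, a polynomial with positive leading coefficient, bounds it from below (after a sign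
change). Neither series is constant, as comparing `x = 1` with `x = 3` through
`ζ(2) = π²/6`, `ζ(0) = -1/2`, `ζ(4) = π⁴/90` and `ζ(-2) = 0` shows.
-/

open Filter Topology

namespace PowerSeries

theorem eval_trunc_mk {R : Type*} [CommSemiring R] (c : ℕ → R) (n : ℕ) (t : R) :
    (trunc n (mk c)).eval t = ∑ i ∈ Finset.range n, c i * t ^ i := by
  simp [Polynomial.eval, eval₂_trunc_eq_sum_range]

theorem natDegree_trunc_succ_mk {R : Type*} [CommSemiring R] {c : ℕ → R} {m : ℕ} (hm : c m ≠ 0) :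
    (trunc (m + 1) (mk c)).natDegree = m :=
  Polynomial.natDegree_eq_of_le_of_coeff_ne_zero (Nat.lt_succ_iff.mp (natDegree_trunc_lt _ m))
    (by simpa [coeff_trunc] using hm)

end PowerSeries

section BoundedAlongFilter

variable {ι : Type*} {l : Filter ι} {c : ℕ → ℝ} {t S : ι → ℝ}

theorem coeff_nonpos_of_hasSum_of_isBoundedUnder [l.NeBot] (ht : Tendsto t l atTop)
    (hS : ∀ᶠ i in l, HasSum (fun m ↦ c m * t i ^ m) (S i)) (hSB : IsBoundedUnder (· ≤ ·) l S)
    {N : ℕ} (hc : ∀ m ≥ N, 0 ≤ c m) {m : ℕ} (hNm : N ≤ m) (hm : m ≠ 0) : c m ≤ 0 := by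
  by_contra! hcm
  set P := PowerSeries.trunc (m + 1) (PowerSeries.mk c)
  have hdeg : P.natDegree = m := PowerSeries.natDegree_trunc_succ_mk hcm.ne'
  have hP : Tendsto (fun i ↦ P.eval (t i)) l atTop := by
    refine (P.tendsto_atTop_of_leadingCoeff_nonneg ?_ ?_).comp ht
    · rw [← Polynomial.natDegree_pos_iff_degree_pos, hdeg]; omega
    · rw [Polynomial.leadingCoeff, hdeg, PowerSeries.coeff_trunc, if_pos m.lt_succ_self,
        PowerSeries.coeff_mk]
      exact hcm.le
  obtain ⟨B, hB : ∀ᶠ i in l, S i ≤ B⟩ := hSB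
  obtain ⟨i, hPi, hti, hSi, hBi⟩ :=
    ((hP.eventually_gt_atTop B).and ((ht.eventually_ge_atTop 0).and (hS.and hB))).exists
  have hPS : P.eval (t i) ≤ S i := by
    rw [PowerSeries.eval_trunc_mk]
    refine sum_le_hasSum _ (fun j hj ↦ ?_) hSi
    have : m + 1 ≤ j := by simpa using hj
    exact mul_nonneg (hc j (by omega)) (pow_nonneg hti j)
  linarith

theorem coeff_eq_zero_of_hasSum_of_isBoundedUnder_abs [l.NeBot] (ht : Tendsto t l atTop)
    (hS : ∀ᶠ i in l, HasSum (fun m ↦ c m * t i ^ m) (S i))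
    (hSB : IsBoundedUnder (· ≤ ·) l fun i ↦ |S i|) {N : ℕ} (hc : ∀ m ≥ N, c m = 0) {m : ℕ}
    (hm : m ≠ 0) : c m = 0 := by
  rcases le_or_gt N m with hNm | hmN
  · exact hc m hNm
  set P := PowerSeries.trunc N (PowerSeries.mk c)
  have hPS : ∀ᶠ i in l, P.eval (t i) = S i := hS.mono fun i hSi ↦ by
    rw [PowerSeries.eval_trunc_mk]
    refine (hasSum_sum_of_ne_finset_zero fun j hj ↦ ?_).unique hSi
    rw [hc j (by simpa using hj), zero_mul]
  have hdeg : P.degree ≤ 0 := by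
    refine not_lt.mp fun hpos ↦ ?_
    obtain ⟨B, hB : ∀ᶠ i in l, |S i| ≤ B⟩ := hSB
    obtain ⟨i, hPi, hPSi, hBi⟩ := ((((P.abs_tendsto_atTop hpos).comp ht).eventually_gt_atTop
      B).and (hPS.and hB)).exists
    simp only [Function.comp_apply, hPSi] at hPi
    linarith
  have hPm : P.coeff m = 0 :=
    P.coeff_eq_zero_of_degree_lt (hdeg.trans_lt (by exact_mod_cast Nat.pos_of_ne_zero hm))
  rwa [PowerSeries.coeff_trunc, if_pos hmN, PowerSeries.coeff_mk] at hPm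

theorem coeff_eq_zero_of_hasSum_of_isBoundedUnder_of_eventually_nonneg [l.NeBot]
    (ht : Tendsto t l atTop) (hS : ∀ᶠ i in l, HasSum (fun m ↦ c m * t i ^ m) (S i))
    (hSB : IsBoundedUnder (· ≤ ·) l fun i ↦ |S i|) (hc : ∀ᶠ m in atTop, 0 ≤ c m) {m : ℕ}
    (hm : m ≠ 0) : c m = 0 := by
  obtain ⟨N, hN⟩ := eventually_atTop.mp hc
  have hSB' : IsBoundedUnder (· ≤ ·) l S := hSB.mono_le (.of_forall fun i ↦ le_abs_self (S i))
  refine coeff_eq_zero_of_hasSum_of_isBoundedUnder_abs ht hS hSB (N := N + 1) (fun k hk ↦ ?_) hm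
  exact le_antisymm (coeff_nonpos_of_hasSum_of_isBoundedUnder ht hS hSB' hN (by omega) (by omega))
    (hN k (by omega))

theorem frequently_pos_and_frequently_neg_of_hasSum_of_isBoundedUnder [l.NeBot]
    (ht : Tendsto t l atTop) (hS : ∀ᶠ i in l, HasSum (fun m ↦ c m * t i ^ m) (S i))
    (hSB : IsBoundedUnder (· ≤ ·) l fun i ↦ |S i|) {m₀ : ℕ} (hm₀ : m₀ ≠ 0) (hc : c m₀ ≠ 0) :
    (∃ᶠ m in atTop, 0 < c m) ∧ ∃ᶠ m in atTop, c m < 0 := by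
  constructor <;> refine fun h ↦ hc ?_ <;> simp only [not_lt] at h
  · have hS' : ∀ᶠ i in l, HasSum (fun m ↦ -c m * t i ^ m) (-S i) :=
      hS.mono fun i hSi ↦ by simpa only [neg_mul] using hSi.neg
    have hSB' : IsBoundedUnder (· ≤ ·) l fun i ↦ |-S i| := by simpa only [abs_neg] using hSB
    exact neg_eq_zero.mp <| coeff_eq_zero_of_hasSum_of_isBoundedUnder_of_eventually_nonneg ht hS'
      hSB' (h.mono fun m ↦ neg_nonneg.mpr) hm₀
  · exact coeff_eq_zero_of_hasSum_of_isBoundedUnder_of_eventually_nonneg ht hS hSB h hm₀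

end BoundedAlongFilter

section EvenOddParts

variable {R : Type*} [CommRing R] [TopologicalSpace R] [IsTopologicalAddGroup R] {a : ℕ → R}
  {x s t : R}

theorem HasSum.even_part (hs : HasSum (fun n ↦ a n * x ^ n) s)
    (ht : HasSum (fun n ↦ a n * (-x) ^ n) t) :
    HasSum (fun m ↦ 2 * a (2 * m) * (x ^ 2) ^ m) (s + t) := by
  have hinj : Function.Injective (2 * ·) := fun i j h ↦ by simp only at h; omega
  refine ((hinj.hasSum_iff fun n hn ↦ ?_).mpr (hs.add ht)).congr_fun fun m ↦ ?_
  · obtain ⟨k, rfl⟩ : Odd n := Nat.not_even_iff_odd.mp fun ⟨k, hk⟩ ↦ hn ⟨k, by simp only; omega⟩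
    rw [Odd.neg_pow ⟨k, rfl⟩]; ring
  · simp only [Function.comp_apply, Even.neg_pow ⟨m, two_mul m⟩, ← pow_mul]; ring

theorem HasSum.odd_part (hs : HasSum (fun n ↦ a n * x ^ n) s)
    (ht : HasSum (fun n ↦ a n * (-x) ^ n) t) :
    HasSum (fun m ↦ 2 * a (2 * m + 1) * x ^ (2 * m + 1)) (s - t) := by
  have hinj : Function.Injective (2 * · + 1) := fun i j h ↦ by simp only at h; omega
  refine ((hinj.hasSum_iff fun n hn ↦ ?_).mpr (hs.sub ht)).congr_fun fun m ↦ ?_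
  · obtain ⟨k, rfl⟩ : Even n := Nat.not_odd_iff_even.mp fun ⟨k, hk⟩ ↦ hn ⟨k, hk.symm⟩
    rw [Even.neg_pow ⟨k, rfl⟩]; ring
  · simp only [Function.comp_apply, Odd.neg_pow ⟨m, rfl⟩]; ring

end EvenOddParts

theorem hasSum_mul_pow_of_forall_ne_zero {R : Type*} [Semiring R] [TopologicalSpace R]
    {c : ℕ → R} (hc : ∀ m ≠ 0, c m = 0) (y : R) : HasSum (fun m ↦ c m * y ^ m) (c 0) := by
  simpa using hasSum_single (f := fun m ↦ c m * y ^ m) 0 fun m hm ↦ by simp [hc m hm]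

theorem tendsto_riemannZeta_atTop : Tendsto (fun x : ℝ ↦ riemannZeta x) atTop (𝓝 1) := by
  refine (LSeries.tendsto_atTop (f := 1)
    (LSeries.abscissaOfAbsConv_one ▸ EReal.coe_lt_top 1)).congr' ?_
  filter_upwards [eventually_gt_atTop 1] with x hx
  exact LSeries_one_eq_riemannZeta (by simpa using hx)

theorem tendsto_two_mul_add_three : Tendsto (fun k : ℕ ↦ (2 * k + 3 : ℝ)) atTop atTop :=
  tendsto_atTop_add_const_right _ _ (tendsto_natCast_atTop_atTop.const_mul_atTop two_pos)

theorem tendsto_re_riemannZeta_one_add_two_mul_add_three :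
    Tendsto (fun k : ℕ ↦ (riemannZeta (1 + (2 * k + 3 : ℝ))).re) atTop (𝓝 1) := by
  have h := (Complex.continuous_re.tendsto 1).comp <|
    tendsto_riemannZeta_atTop.comp (tendsto_atTop_add_const_left _ 1 tendsto_two_mul_add_three)
  simpa [Function.comp_def] using h

theorem riemannZeta_one_sub_two_mul_add_three (k : ℕ) :
    riemannZeta (1 - (2 * k + 3 : ℝ)) = 0 := by
  convert riemannZeta_neg_two_mul_nat_add_one k using 2
  push_cast; ring

theorem riemannZeta_neg_two : riemannZeta (-2) = 0 := by
  simpa using riemannZeta_neg_two_mul_nat_add_one 0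

theorem pi_sq_bounds : 9.869 < Real.pi ^ 2 ∧ Real.pi ^ 2 < 9.8697 :=
  ⟨by nlinarith [Real.pi_gt_d4], by nlinarith [Real.pi_gt_d4, Real.pi_lt_d4]⟩

theorem tendsto_riemannZeta_even_sum :
    Tendsto (fun k : ℕ ↦ ((riemannZeta (1 + (2 * k + 3 : ℝ))).re
      + (riemannZeta (1 - (2 * k + 3 : ℝ))).re) / 2) atTop (𝓝 (1 / 2)) := by
  simp only [riemannZeta_one_sub_two_mul_add_three, Complex.zero_re, add_zero]
  exact tendsto_re_riemannZeta_one_add_two_mul_add_three.div_const 2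

theorem tendsto_riemannZeta_odd_sum :
    Tendsto (fun k : ℕ ↦ ((riemannZeta (1 + (2 * k + 3 : ℝ))).re
      - (riemannZeta (1 - (2 * k + 3 : ℝ))).re - 2 / (2 * k + 3 : ℝ)) / (2 * (2 * k + 3 : ℝ)))
      atTop (𝓝 0) := by
  simp only [riemannZeta_one_sub_two_mul_add_three, Complex.zero_re, sub_zero]
  exact (tendsto_re_riemannZeta_one_add_two_mul_add_three.sub
    (tendsto_const_nhds.div_atTop tendsto_two_mul_add_three)).div_atTop
    (tendsto_two_mul_add_three.const_mul_atTop two_pos)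

section StieltjesConstants

variable {γ : ℕ → ℝ}
  (hγ : ∀ s : ℂ, s ≠ 1 →
    HasSum (fun n : ℕ => (γ n : ℂ) * (s - 1) ^ n) (riemannZeta s - 1 / (s - 1)))

include hγ

theorem hasSum_stieltjes_real {x : ℝ} (hx : x ≠ 0) :
    HasSum (fun n ↦ γ n * x ^ n) ((riemannZeta (1 + x)).re - 1 / x) := by
  have h := Complex.hasSum_re (hγ (1 + x) (by simpa using hx))
  simpa [← Complex.ofReal_pow, ← Complex.ofReal_mul] using h

theorem hasSum_stieltjes_neg {x : ℝ} (hx : x ≠ 0) :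
    HasSum (fun n ↦ γ n * (-x) ^ n) ((riemannZeta (1 - x)).re + 1 / x) := by
  simpa [sub_eq_add_neg] using hasSum_stieltjes_real hγ (neg_ne_zero.mpr hx)

theorem hasSum_stieltjes_even {x : ℝ} (hx : x ≠ 0) :
    HasSum (fun m ↦ γ (2 * m) * (x ^ 2) ^ m)
      (((riemannZeta (1 + x)).re + (riemannZeta (1 - x)).re) / 2) := by
  have h := ((hasSum_stieltjes_real hγ hx).even_part (hasSum_stieltjes_neg hγ hx)).div_const 2
  rw [sub_add_add_cancel] at h
  exact h.congr_fun fun m ↦ by ring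

theorem hasSum_stieltjes_odd {x : ℝ} (hx : x ≠ 0) :
    HasSum (fun m ↦ γ (2 * m + 1) * (x ^ 2) ^ m)
      (((riemannZeta (1 + x)).re - (riemannZeta (1 - x)).re - 2 / x) / (2 * x)) := by
  have h := ((hasSum_stieltjes_real hγ hx).odd_part (hasSum_stieltjes_neg hγ hx)).div_const (2 * x)
  rw [show ∀ a b : ℝ, a - 1 / x - (b + 1 / x) = a - b - 2 / x from fun a b ↦ by ring] at h
  exact h.congr_fun fun m ↦ by field_simp; ring

theorem exists_stieltjes_even_ne_zero : ∃ m ≠ 0, γ (2 * m) ≠ 0 := by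
  by_contra! h
  have hconst {x : ℝ} (hx : x ≠ 0) :
      ((riemannZeta (1 + x)).re + (riemannZeta (1 - x)).re) / 2 = γ 0 := by
    simpa using (hasSum_stieltjes_even hγ hx).unique
      (hasSum_mul_pow_of_forall_ne_zero (c := fun m ↦ γ (2 * m)) h (x ^ 2))
  have h1 := hconst one_ne_zero
  have h3 := hconst three_ne_zero
  norm_num [riemannZeta_two, riemannZeta_four, riemannZeta_zero, riemannZeta_neg_two,
    ← Complex.ofReal_pow] at h1 h3
  obtain ⟨hlo, hhi⟩ := pi_sq_bounds
  rw [show Real.pi ^ 4 = (Real.pi ^ 2) ^ 2 by ring] at h3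
  nlinarith

theorem exists_stieltjes_odd_ne_zero : ∃ m ≠ 0, γ (2 * m + 1) ≠ 0 := by
  by_contra! h
  have hconst {x : ℝ} (hx : x ≠ 0) :
      ((riemannZeta (1 + x)).re - (riemannZeta (1 - x)).re - 2 / x) / (2 * x) = γ 1 := by
    simpa using (hasSum_stieltjes_odd hγ hx).unique
      (hasSum_mul_pow_of_forall_ne_zero (c := fun m ↦ γ (2 * m + 1)) h (x ^ 2))
  have h1 := hconst one_ne_zero
  have h3 := hconst three_ne_zero
  norm_num [riemannZeta_two, riemannZeta_four, riemannZeta_zero, riemannZeta_neg_two,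
    ← Complex.ofReal_pow] at h1 h3
  obtain ⟨hlo, hhi⟩ := pi_sq_bounds
  rw [show Real.pi ^ 4 = (Real.pi ^ 2) ^ 2 by ring] at h3
  nlinarith

theorem frequently_stieltjes_even_pos_and_neg :
    (∃ᶠ m in atTop, 0 < γ (2 * m)) ∧ ∃ᶠ m in atTop, γ (2 * m) < 0 := by
  obtain ⟨m₀, hm₀, hγm₀⟩ := exists_stieltjes_even_ne_zero hγ
  exact frequently_pos_and_frequently_neg_of_hasSum_of_isBoundedUnder
    (t := fun k : ℕ ↦ (2 * k + 3 : ℝ) ^ 2)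
    ((tendsto_pow_atTop two_ne_zero).comp tendsto_two_mul_add_three)
    (.of_forall fun k ↦ hasSum_stieltjes_even hγ (by positivity))
    tendsto_riemannZeta_even_sum.abs.isBoundedUnder_le hm₀ hγm₀

theorem frequently_stieltjes_odd_pos_and_neg :
    (∃ᶠ m in atTop, 0 < γ (2 * m + 1)) ∧ ∃ᶠ m in atTop, γ (2 * m + 1) < 0 := by
  obtain ⟨m₀, hm₀, hγm₀⟩ := exists_stieltjes_odd_ne_zero hγ
  exact frequently_pos_and_frequently_neg_of_hasSum_of_isBoundedUnder
    (t := fun k : ℕ ↦ (2 * k + 3 : ℝ) ^ 2)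
    ((tendsto_pow_atTop two_ne_zero).comp tendsto_two_mul_add_three)
    (.of_forall fun k ↦ hasSum_stieltjes_odd hγ (by positivity))
    tendsto_riemannZeta_odd_sum.abs.isBoundedUnder_le hm₀ hγm₀

end StieltjesConstants

theorem Nat.infinite_setOf_pos_and_of_frequently {p : ℕ → Prop} (h : ∃ᶠ n in atTop, p n) :
    {n | 0 < n ∧ p n}.Infinite :=
  Nat.frequently_atTop_iff_infinite.mp <|
    (h.and_eventually (eventually_gt_atTop 0)).mono fun _ hn ↦ ⟨hn.2, hn.1⟩

theorem Nat.infinite_setOf_pos_and_two_mul_sub_one_of_frequently {p : ℕ → Prop}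
    (h : ∃ᶠ m in atTop, p (2 * m + 1)) : {n | 0 < n ∧ p (2 * n - 1)}.Infinite :=
  Nat.infinite_setOf_pos_and_of_frequently <| (tendsto_add_atTop_nat 1).frequently <|
    h.mono fun m hm ↦ by rwa [show 2 * (m + 1) - 1 = 2 * m + 1 by omega]

/-- Each of the four inequalities `γ_{2n} > 0`, `γ_{2n} < 0`, `γ_{2n-1} > 0`, `γ_{2n-1} < 0`
holds for infinitely many positive integers `n`. -/
theorem stieltjes_even_odd_sign_changes (γ : ℕ → ℝ)
    (hγ : ∀ s : ℂ, s ≠ 1 →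
      HasSum (fun n : ℕ => (γ n : ℂ) * (s - 1) ^ n) (riemannZeta s - 1 / (s - 1))) :
    {n : ℕ | 0 < n ∧ 0 < γ (2 * n)}.Infinite ∧
    {n : ℕ | 0 < n ∧ γ (2 * n) < 0}.Infinite ∧
    {n : ℕ | 0 < n ∧ 0 < γ (2 * n - 1)}.Infinite ∧
    {n : ℕ | 0 < n ∧ γ (2 * n - 1) < 0}.Infinite := by
  obtain ⟨hevenPos, hevenNeg⟩ := frequently_stieltjes_even_pos_and_neg hγ
  obtain ⟨hoddPos, hoddNeg⟩ := frequently_stieltjes_odd_pos_and_neg hγ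
  exact ⟨Nat.infinite_setOf_pos_and_of_frequently hevenPos,
    Nat.infinite_setOf_pos_and_of_frequently hevenNeg,
    Nat.infinite_setOf_pos_and_two_mul_sub_one_of_frequently (p := (0 < γ ·)) hoddPos,
    Nat.infinite_setOf_pos_and_two_mul_sub_one_of_frequently (p := (γ · < 0)) hoddNeg⟩
end

section
/- Let K be a number field of degree m over ℚ, let N_K(t) = #{nonzero ideals 𝔞 of O_K : N𝔞 ≤ t}, and let ρ be the residue of ζ_K at s = 1. Then for every integer n ≥ 1, the limit lim_{x→∞} (∑_{N𝔞 ≤ x} (log N𝔞)^n / N𝔞 − ρ · (log x)^{n+1}/(n+1)) exists, assuming N_K(t) = ρ t + O(t^{1−1/m}). -/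
/-!
Write `∑_{1 ≤ k ≤ t} c k = ρ t + E(t)` with `E(t) = O(t^{1-ε})`. Abel summation against
`f(t) = (log t)^n / t`, followed by an integration by parts of the main term, gives
`∑_{k ≤ x} c k f(k) - ρ ∫_1^x f = f(x) E(x) + ρ f(1) - ∫_1^x f'(t) E(t) dt`,
and `∫_1^x f = (log x)^{n+1} / (n+1)`. Since `f(x) E(x) = O(x^{-ε/2})` and
`f'(t) E(t) = O(t^{-1-ε/2})` is integrable at infinity, the right-hand side converges.
-/

open Filter NumberField Finset Asymptotics MeasureTheory intervalIntegral Topology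

noncomputable def summatoryRemainder (c : ℕ → ℝ) (ρ t : ℝ) : ℝ :=
  ∑ k ∈ Icc 1 ⌊t⌋₊, c k - ρ * t

section AbelSummation

variable (c : ℕ → ℝ) {f f' : ℝ → ℝ}

theorem sum_Icc_zero_mul_update_zero (g : ℕ → ℝ) (m : ℕ) :
    ∑ k ∈ Icc 0 m, g k * Function.update c 0 0 k = ∑ k ∈ Icc 1 m, g k * c k := by
  rw [Icc_eq_cons_Ioc (Nat.zero_le m), sum_cons, ← Finset.Icc_add_one_left_eq_Ioc]
  simp only [Function.update_self, mul_zero, zero_add]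
  exact sum_congr rfl fun k hk ↦ by rw [Function.update_of_ne (by grind)]

theorem sum_Icc_one_mul_eq_sub_integral_mul
    (hf : ∀ t ∈ Set.Ici (1 : ℝ), HasDerivAt f (f' t) t) (hf' : ContinuousOn f' (Set.Ici 1))
    (b : ℝ) :
    ∑ k ∈ Icc 1 ⌊b⌋₊, f k * c k =
      f b * ∑ k ∈ Icc 1 ⌊b⌋₊, c k - ∫ t in Set.Ioc 1 b, f' t * ∑ k ∈ Icc 1 ⌊t⌋₊, c k := by
  have hderiv : Set.EqOn (deriv f) f' (Set.Ici 1) := fun t ht ↦ (hf t ht).deriv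
  have abel := sum_mul_eq_sub_integral_mul₀ (Function.update c 0 0) (f := f)
    (Function.update_self 0 0 c) b (fun t ht ↦ (hf t ht.1).differentiableAt)
    ((hf'.mono Set.Icc_subset_Ici_self).integrableOn_Icc.congr_fun
      (hderiv.mono Set.Icc_subset_Ici_self).symm measurableSet_Icc)
  have hN (m : ℕ) : ∑ k ∈ Icc 0 m, Function.update c 0 0 k = ∑ k ∈ Icc 1 m, c k := by
    simpa using sum_Icc_zero_mul_update_zero c 1 m
  rw [sum_Icc_zero_mul_update_zero, hN] at abel
  rw [abel]
  congr 1
  refine setIntegral_congr_fun measurableSet_Ioc fun t ht ↦ ?_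
  rw [hderiv (Set.mem_Ici.2 ht.1.le), hN]

theorem locallyIntegrableOn_mul_summatoryRemainder (ρ : ℝ) (hf' : ContinuousOn f' (Set.Ici 1)) :
    LocallyIntegrableOn (fun t ↦ f' t * summatoryRemainder c ρ t) (Set.Ici 1) := by
  have hN := locallyIntegrableOn_mul_sum_Icc c (m := 1) zero_le_one
    (hf'.locallyIntegrableOn measurableSet_Ici)
  have hlin : LocallyIntegrableOn (fun t ↦ f' t * (ρ * t)) (Set.Ici 1) :=
    (hf'.mul (continuousOn_const.mul continuousOn_id)).locallyIntegrableOn measurableSet_Ici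
  simpa only [summatoryRemainder, mul_sub, Pi.sub_def] using hN.sub hlin

theorem sum_mul_sub_integral_eq (ρ : ℝ)
    (hf : ∀ t ∈ Set.Ici (1 : ℝ), HasDerivAt f (f' t) t) (hf' : ContinuousOn f' (Set.Ici 1))
    {b : ℝ} (hb : 1 ≤ b) :
    ∑ k ∈ Icc 1 ⌊b⌋₊, f k * c k - ρ * ∫ t in (1 : ℝ)..b, f t =
      f b * summatoryRemainder c ρ b + ρ * f 1 -
        ∫ t in Set.Ioc 1 b, f' t * summatoryRemainder c ρ t := by
  have hsub : Set.uIcc 1 b ⊆ Set.Ici 1 := by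
    rw [Set.uIcc_of_le hb]; exact Set.Icc_subset_Ici_self
  have hparts : ∫ t in (1 : ℝ)..b, t * f' t = b * f b - 1 * f 1 - ∫ t in (1 : ℝ)..b, 1 * f t :=
    integral_mul_deriv_eq_deriv_mul (fun t _ ↦ hasDerivAt_id t) (fun t ht ↦ hf t (hsub ht))
      intervalIntegrable_const ((hf'.mono hsub).intervalIntegrable)
  have hsplit : ∫ t in Set.Ioc 1 b, f' t * ∑ k ∈ Icc 1 ⌊t⌋₊, c k =
      ρ * (∫ t in (1 : ℝ)..b, t * f' t) + ∫ t in Set.Ioc 1 b, f' t * summatoryRemainder c ρ t := by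
    have hmain : IntegrableOn (fun t ↦ ρ * (t * f' t)) (Set.Ioc 1 b) :=
      ((continuousOn_const.mul (continuousOn_id.mul hf')).mono
        Set.Icc_subset_Ici_self).integrableOn_Icc.mono_set Set.Ioc_subset_Icc_self
    have hrem : IntegrableOn (fun t ↦ f' t * summatoryRemainder c ρ t) (Set.Ioc 1 b) :=
      ((locallyIntegrableOn_mul_summatoryRemainder c ρ hf').integrableOn_compact_subset
        Set.Icc_subset_Ici_self isCompact_Icc).mono_set Set.Ioc_subset_Icc_self
    rw [integral_of_le hb, ← MeasureTheory.integral_const_mul, ← integral_add hmain hrem]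
    refine setIntegral_congr_fun measurableSet_Ioc fun t _ ↦ ?_
    simp only [summatoryRemainder]
    ring
  rw [sum_Icc_one_mul_eq_sub_integral_mul c hf hf', hsplit]
  simp only [summatoryRemainder, one_mul] at hparts ⊢
  linear_combination (-ρ) * hparts

theorem tendsto_sum_mul_sub_integral (ρ : ℝ)
    (hf : ∀ t ∈ Set.Ici (1 : ℝ), HasDerivAt f (f' t) t) (hf' : ContinuousOn f' (Set.Ici 1))
    (hlim : Tendsto (fun t ↦ f t * summatoryRemainder c ρ t) atTop (𝓝 0)) {g : ℝ → ℝ}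
    (hg : (fun t ↦ f' t * summatoryRemainder c ρ t) =O[atTop] g)
    (hg_int : IntegrableAtFilter g atTop) :
    Tendsto (fun x ↦ ∑ k ∈ Icc 1 ⌊x⌋₊, f k * c k - ρ * ∫ t in (1 : ℝ)..x, f t) atTop
      (𝓝 (ρ * f 1 - ∫ t in Set.Ioi 1, f' t * summatoryRemainder c ρ t)) := by
  have hint : IntegrableOn (fun t ↦ f' t * summatoryRemainder c ρ t) (Set.Ioi 1) :=
    Iff.mp integrableOn_Ici_iff_integrableOn_Ioi <|
      (locallyIntegrableOn_mul_summatoryRemainder c ρ hf').integrableOn_of_isBigO_atTop hg hg_int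
  have htail := intervalIntegral_tendsto_integral_Ioi 1 hint tendsto_id
  have := (hlim.add_const (ρ * f 1)).sub htail
  rw [zero_add] at this
  refine this.congr' ?_
  filter_upwards [eventually_ge_atTop 1] with x hx
  rw [sum_mul_sub_integral_eq c ρ hf hf' hx, id, integral_of_le hx]

end AbelSummation

section LogPowDiv

open Real

theorem hasDerivAt_log_pow_div (n : ℕ) {t : ℝ} (ht : t ≠ 0) :
    HasDerivAt (fun t ↦ log t ^ n / t) ((n * log t ^ (n - 1) - log t ^ n) / t ^ 2) t := by
  have hpow : HasDerivAt (fun t ↦ log t ^ n) (n * log t ^ (n - 1) * t⁻¹) t :=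
    (hasDerivAt_log ht).pow n
  refine (hpow.div (hasDerivAt_id' t) ht).congr_deriv ?_
  field_simp

theorem integral_log_pow_div (n : ℕ) {b : ℝ} (hb : 0 < b) :
    ∫ t in (1 : ℝ)..b, log t ^ n / t = log b ^ (n + 1) / (n + 1) := by
  have hpos : ∀ t ∈ Set.uIcc 1 b, t ≠ 0 := fun t ht ↦
    (lt_of_lt_of_le (lt_min one_pos hb) ht.1).ne'
  have hderiv : ∀ t ∈ Set.uIcc 1 b,
      HasDerivAt (fun t ↦ log t ^ (n + 1) / (n + 1)) (log t ^ n / t) t := fun t ht ↦ by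
    have hpow : HasDerivAt (fun t ↦ log t ^ (n + 1)) ((n + 1 : ℕ) * log t ^ n * t⁻¹) t :=
      (hasDerivAt_log (hpos t ht)).pow (n + 1)
    refine (hpow.div_const _).congr_deriv ?_
    push_cast
    field_simp
  have hcont : ContinuousOn (fun t ↦ log t ^ n / t) (Set.uIcc 1 b) :=
    ((continuousOn_log.mono fun t ht ↦ hpos t ht).pow n).div continuousOn_id hpos
  rw [integral_eq_sub_of_hasDerivAt hderiv hcont.intervalIntegrable]
  simp

theorem isBigO_log_pow_rpow (n : ℕ) {δ : ℝ} (hδ : 0 < δ) :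
    (fun t ↦ log t ^ n) =O[atTop] fun t ↦ t ^ δ := by
  simpa only [rpow_natCast] using (isLittleO_log_rpow_rpow_atTop (n : ℝ) hδ).isBigO

theorem isBigO_inv_pow_rpow (k : ℕ) : (fun t : ℝ ↦ (t ^ k)⁻¹) =O[atTop] fun t ↦ t ^ (-(k : ℝ)) := by
  refine EventuallyEq.isBigO ?_
  filter_upwards [eventually_gt_atTop 0] with t ht
  rw [rpow_neg ht.le, rpow_natCast]

theorem isBigO_log_pow_div_rpow (n : ℕ) {δ : ℝ} (hδ : 0 < δ) :
    (fun t ↦ log t ^ n / t) =O[atTop] fun t ↦ t ^ (δ - 1) := by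
  have := (isBigO_log_pow_rpow n hδ).mul_atTop_rpow_of_isBigO_rpow δ (-1) (δ - 1)
    (by simpa using isBigO_inv_pow_rpow 1) (by linarith)
  simpa only [div_eq_mul_inv, Pi.mul_def] using this

theorem isBigO_deriv_log_pow_div_rpow (n : ℕ) {δ : ℝ} (hδ : 0 < δ) :
    (fun t ↦ (n * log t ^ (n - 1) - log t ^ n) / t ^ 2) =O[atTop] fun t ↦ t ^ (δ - 2) := by
  have hnum := ((isBigO_log_pow_rpow (n - 1) hδ).const_mul_left (n : ℝ)).sub
    (isBigO_log_pow_rpow n hδ)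
  have := hnum.mul_atTop_rpow_of_isBigO_rpow δ (-2) (δ - 2)
    (by simpa using isBigO_inv_pow_rpow 2) (by linarith)
  simpa only [div_eq_mul_inv, Pi.mul_def] using this

theorem exists_tendsto_sum_mul_log_pow_div_sub (c : ℕ → ℝ) {ρ ε : ℝ} (hε : 0 < ε)
    (hR : summatoryRemainder c ρ =O[atTop] fun t ↦ t ^ (1 - ε)) (n : ℕ) :
    ∃ L : ℝ, Tendsto (fun x : ℝ ↦
      (∑ k ∈ Icc 1 ⌊x⌋₊, c k * log k ^ n / k) - ρ * log x ^ (n + 1) / (n + 1)) atTop (𝓝 L) := by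
  have hf : ∀ t ∈ Set.Ici (1 : ℝ), HasDerivAt (fun t ↦ log t ^ n / t)
      ((n * log t ^ (n - 1) - log t ^ n) / t ^ 2) t := fun t ht ↦
    hasDerivAt_log_pow_div n (zero_lt_one.trans_le ht).ne'
  have hf' : ContinuousOn (fun t ↦ (n * log t ^ (n - 1) - log t ^ n) / t ^ 2) (Set.Ici 1) := by
    have hne : ∀ t ∈ Set.Ici (1 : ℝ), t ≠ 0 := fun t ht ↦ (zero_lt_one.trans_le ht).ne'
    have hlog : ContinuousOn log (Set.Ici 1) := continuousOn_log.mono hne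
    exact ((continuousOn_const.mul (hlog.pow _)).sub (hlog.pow n)).div (continuousOn_id.pow 2)
      fun t ht ↦ pow_ne_zero 2 (hne t ht)
  have hlim : Tendsto (fun t ↦ log t ^ n / t * summatoryRemainder c ρ t) atTop (𝓝 0) :=
    ((isBigO_log_pow_div_rpow n (half_pos hε)).mul_atTop_rpow_of_isBigO_rpow _ _ (-(ε / 2)) hR
      (by linarith)).trans_tendsto (tendsto_rpow_neg_atTop (half_pos hε))
  have hdom := (isBigO_deriv_log_pow_div_rpow n (half_pos hε)).mul_atTop_rpow_of_isBigO_rpow _ _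
    (-1 - ε / 2) hR (by linarith)
  refine ⟨_, (tendsto_sum_mul_sub_integral c ρ hf hf' hlim hdom
    (integrableAtFilter_rpow_atTop_iff.mpr (by linarith))).congr' ?_⟩
  filter_upwards [eventually_gt_atTop 0] with x hx
  rw [integral_log_pow_div n hx, mul_div_assoc]
  congr 2 with k
  ring

end LogPowDiv

theorem Ideal.natCard_ne_bot_absNorm_le_eq_sum {S : Type*} [CommRing S] [IsDedekindDomain S]
    [Module.Free ℤ S] [Module.Finite ℤ S] [CharZero S] {t : ℝ} (ht : 0 ≤ t) :
    (Nat.card {I : Ideal S // I ≠ ⊥ ∧ (Ideal.absNorm I : ℝ) ≤ t} : ℝ) =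
      ∑ k ∈ Icc 1 ⌊t⌋₊, (Nat.card {I : Ideal S // Ideal.absNorm I = k} : ℝ) := by
  have (k : ℕ) : Fintype {I : Ideal S // Ideal.absNorm I = k} :=
    (Ideal.finite_setOfPred_absNorm_eq k).fintype
  have hmem (I : Ideal S) :
      (I ≠ ⊥ ∧ (Ideal.absNorm I : ℝ) ≤ t) ↔ Ideal.absNorm I ∈ Icc 1 ⌊t⌋₊ := by
    simp only [mem_Icc, Nat.le_floor_iff ht, Nat.one_le_iff_ne_zero, ne_eq,
      Ideal.absNorm_eq_zero_iff]
  rw [← Nat.card_congr (Equiv.sigmaSubtypeFiberEquivSubtype (fun I : Ideal S ↦ Ideal.absNorm I)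
      (q := (· ∈ Icc 1 ⌊t⌋₊)) hmem),
    Nat.card_eq_fintype_card, Fintype.card_sigma, Nat.cast_sum,
    ← sum_coe_sort (Icc 1 ⌊t⌋₊)]
  simp only [Nat.card_eq_fintype_card]

theorem dedekind_stieltjes_limit_exists_general (K : Type*) [Field K] [NumberField K]
    (ρ : ℝ)
    (NK : ℝ → ℝ)
    (hNK : ∀ t : ℝ, NK t =
      (Nat.card {I : Ideal (𝓞 K) // I ≠ ⊥ ∧ (Ideal.absNorm I : ℝ) ≤ t} : ℝ))
    (hcount : ∃ C : ℝ, ∀ t : ℝ, 1 ≤ t →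
      |NK t - ρ * t| ≤ C * t ^ ((1 : ℝ) - 1 / (Module.finrank ℚ K : ℝ)))
    (n : ℕ) :
    ∃ L : ℝ, Tendsto
      (fun x : ℝ =>
        (∑ k ∈ Finset.Icc 1 ⌊x⌋₊,
          (Nat.card {I : Ideal (𝓞 K) // Ideal.absNorm I = k} : ℝ) * (Real.log k) ^ n / k)
        - ρ * (Real.log x) ^ (n + 1) / (n + 1)) atTop (nhds L) := by
  obtain ⟨C, hC⟩ := hcount
  have hε : 0 < 1 / (Module.finrank ℚ K : ℝ) := by
    have := Module.finrank_pos (R := ℚ) (M := K)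
    positivity
  refine exists_tendsto_sum_mul_log_pow_div_sub _ hε (IsBigO.of_bound C ?_) n
  filter_upwards [eventually_ge_atTop 1] with t ht
  rw [summatoryRemainder, ← Ideal.natCard_ne_bot_absNorm_le_eq_sum (by linarith), ← hNK,
    Real.norm_eq_abs, Real.norm_of_nonneg (by positivity)]
  exact hC t ht

/-- For a number field `K` of degree `m` with ideal counting function
`N_K(t) = ρt + O(t^{1−1/m})`, for every `n ≥ 1` the limit
`lim_{x→∞} (∑_{N𝔞 ≤ x} (log N𝔞)^n / N𝔞 − ρ (log x)^{n+1}/(n+1))` exists. -/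
theorem dedekind_stieltjes_limit_exists (K : Type*) [Field K] [NumberField K]
    (ρ : ℝ)
    (NK : ℝ → ℝ)
    (hNK : ∀ t : ℝ, NK t =
      (Nat.card {I : Ideal (𝓞 K) // I ≠ ⊥ ∧ (Ideal.absNorm I : ℝ) ≤ t} : ℝ))
    (hcount : ∃ C : ℝ, ∀ t : ℝ, 1 ≤ t →
      |NK t - ρ * t| ≤ C * t ^ ((1 : ℝ) - 1 / (Module.finrank ℚ K : ℝ)))
    (n : ℕ) (hn : 1 ≤ n) :
    ∃ L : ℝ, Tendsto
      (fun x : ℝ =>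
        (∑ k ∈ Finset.Icc 1 ⌊x⌋₊,
          (Nat.card {I : Ideal (𝓞 K) // Ideal.absNorm I = k} : ℝ) * (Real.log k) ^ n / k)
        - ρ * (Real.log x) ^ (n + 1) / (n + 1)) atTop (nhds L) :=
  dedekind_stieltjes_limit_exists_general K ρ NK hNK hcount n
end

section
/- Infinitely many of the Dedekind–Stieltjes constants γ_n(K) are positive and infinitely many are negative, for any number field K. -/
/-!
For `m ≥ 1` the series `∑ γₙ mⁿ` converges to `ζ_K(m + 1) - ρ / m`, which stays bounded because
`0 ≤ ζ_K(m + 1) ≤ ζ_K(2)`. If the `γₙ` were eventually of one sign, comparing the leading term of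
the tail with this bound would force them to vanish from some point on, and then, by downward
induction, to vanish for all `n ≥ 1`. So `ζ_K(s) = γ₀ + ρ / (s - 1)` at the integers `s ≥ 2`, which
is impossible: `ζ_K(s) - 1` is positive and decays like `2⁻ˢ`, every nontrivial ideal having norm
at least `2`.
-/

open Filter NumberField

lemma nonpos_of_mul_pow_le {a C : ℝ} {b : ℕ → ℝ} {n : ℕ}
    (h : ∀ m : ℕ, 1 ≤ m →
      a * (m : ℝ) ^ (n + 1) ≤ C + ∑ k ∈ Finset.range (n + 1), |b k| * (m : ℝ) ^ k) :
    a ≤ 0 := by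
  set B := |C| + ∑ k ∈ Finset.range (n + 1), |b k|
  have hlin : ∀ m : ℕ, 1 ≤ m → a * m ≤ B := by
    intro m hm
    have hm' : (1 : ℝ) ≤ m := by exact_mod_cast hm
    have hsum : ∑ k ∈ Finset.range (n + 1), |b k| * (m : ℝ) ^ k
        ≤ (∑ k ∈ Finset.range (n + 1), |b k|) * (m : ℝ) ^ n := by
      rw [Finset.sum_mul]
      gcongr with k hk
      exact Nat.lt_succ_iff.mp (Finset.mem_range.mp hk)
    have hC : C ≤ |C| * (m : ℝ) ^ n :=
      (le_abs_self C).trans (le_mul_of_one_le_right (abs_nonneg C) (one_le_pow₀ hm'))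
    refine le_of_mul_le_mul_right ?_ (pow_pos (by linarith) n : (0 : ℝ) < (m : ℝ) ^ n)
    calc a * m * (m : ℝ) ^ n = a * (m : ℝ) ^ (n + 1) := by ring
      _ ≤ B * (m : ℝ) ^ n := by linarith [h m hm]
  by_contra! ha
  obtain ⟨m, hmB, hm1⟩ := ((tendsto_natCast_atTop_atTop.const_mul_atTop ha).eventually_gt_atTop B
    |>.and (eventually_ge_atTop 1)).exists
  exact (hlin m hm1).not_gt hmB

section PowerSeries

variable {γ : ℕ → ℝ} {f : ℕ → ℝ} {C : ℝ}

lemma coeff_nonpos_of_tail_nonneg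
    (hsum : ∀ m : ℕ, 1 ≤ m → HasSum (fun k => γ k * (m : ℝ) ^ k) (f m))
    (hf : ∀ m : ℕ, 1 ≤ m → f m ≤ C) {n : ℕ} (htail : ∀ k, n + 1 < k → 0 ≤ γ k) :
    γ (n + 1) ≤ 0 := by
  refine nonpos_of_mul_pow_le (C := C) (b := γ) (n := n) fun m hm => ?_
  have hm0 : (0 : ℝ) ≤ m := m.cast_nonneg
  have hrest := (hasSum_nat_add_iff' (n + 1)).mpr (hsum m hm)
  have hlead : γ (n + 1) * (m : ℝ) ^ (n + 1)
      ≤ f m - ∑ k ∈ Finset.range (n + 1), γ k * (m : ℝ) ^ k := by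
    simpa using le_hasSum hrest 0 fun j hj =>
      mul_nonneg (htail _ (by omega)) (pow_nonneg hm0 _)
  have hhead : -∑ k ∈ Finset.range (n + 1), γ k * (m : ℝ) ^ k
      ≤ ∑ k ∈ Finset.range (n + 1), |γ k| * (m : ℝ) ^ k := by
    rw [← Finset.sum_neg_distrib]
    gcongr with k
    calc -(γ k * (m : ℝ) ^ k) ≤ |γ k * (m : ℝ) ^ k| := neg_le_abs _
      _ = |γ k| * (m : ℝ) ^ k := by rw [abs_mul, abs_of_nonneg (pow_nonneg hm0 k)]
  linarith [hf m hm]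

lemma coeff_succ_eq_zero_of_eventually_nonneg
    (hsum : ∀ m : ℕ, 1 ≤ m → HasSum (fun k => γ k * (m : ℝ) ^ k) (f m))
    (hf : ∀ m : ℕ, 1 ≤ m → |f m| ≤ C) (hγ : ∀ᶠ k in atTop, 0 ≤ γ k) (n : ℕ) :
    γ (n + 1) = 0 := by
  obtain ⟨N, hN⟩ := eventually_atTop.mp hγ
  have hupper : ∀ m : ℕ, 1 ≤ m → f m ≤ C := fun m hm => (abs_le.mp (hf m hm)).2
  have hlower : ∀ m : ℕ, 1 ≤ m → -f m ≤ C := fun m hm => by linarith [(abs_le.mp (hf m hm)).1]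
  have hsum_neg : ∀ m : ℕ, 1 ≤ m → HasSum (fun k => -γ k * (m : ℝ) ^ k) (-f m) := fun m hm => by
    simpa only [neg_mul] using (hsum m hm).neg
  have hlarge : ∀ n, N ≤ n + 1 → γ (n + 1) = 0 := fun n hn =>
    le_antisymm (coeff_nonpos_of_tail_nonneg hsum hupper fun k hk => hN k (by omega)) (hN _ hn)
  have hstep : ∀ n, (∀ k, n + 1 < k → γ k = 0) → γ (n + 1) = 0 := fun n h =>
    le_antisymm (coeff_nonpos_of_tail_nonneg hsum hupper fun k hk => (h k hk).ge)
      (neg_nonpos.mp (coeff_nonpos_of_tail_nonneg (γ := fun k => -γ k) hsum_neg hlower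
        fun k hk => by simp [h k hk]))
  suffices ∀ d n, N ≤ n + 1 + d → γ (n + 1) = 0 from this N n (by omega)
  intro d
  induction d with
  | zero => exact hlarge
  | succ d ih =>
    intro n hn
    refine hstep n fun k hk => ?_
    obtain ⟨k, rfl⟩ : ∃ k', k = k' + 1 := ⟨k - 1, by omega⟩
    exact ih k (by omega)

lemma frequently_pos_and_frequently_neg_coeff
    (hsum : ∀ m : ℕ, 1 ≤ m → HasSum (fun k => γ k * (m : ℝ) ^ k) (f m))
    (hf : ∀ m : ℕ, 1 ≤ m → |f m| ≤ C) (hγ : ∃ n, γ (n + 1) ≠ 0) :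
    (∃ᶠ k in atTop, 0 < γ k) ∧ ∃ᶠ k in atTop, γ k < 0 := by
  obtain ⟨n, hn⟩ := hγ
  refine ⟨fun hpos => hn ?_, fun hneg => hn ?_⟩
  · have hsum_neg : ∀ m : ℕ, 1 ≤ m → HasSum (fun k => -γ k * (m : ℝ) ^ k) (-f m) := fun m hm => by
      simpa only [neg_mul] using (hsum m hm).neg
    refine neg_eq_zero.mp (coeff_succ_eq_zero_of_eventually_nonneg (γ := fun k => -γ k) hsum_neg
      (fun m hm => (abs_neg (f m)).trans_le (hf m hm)) (hpos.mono fun k hk => ?_) n)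
    exact neg_nonneg.mpr (not_lt.mp hk)
  · exact coeff_succ_eq_zero_of_eventually_nonneg hsum hf (hneg.mono fun k hk => not_lt.mp hk) n

lemma hasSum_mul_pow_of_coeff_succ_eq_zero (hγ : ∀ n, γ (n + 1) = 0) (t : ℝ) :
    HasSum (fun n => γ n * t ^ n) (γ 0) := by
  simpa using hasSum_single (f := fun n => γ n * t ^ n) 0 fun n hn => by
    obtain ⟨k, rfl⟩ := Nat.exists_eq_succ_of_ne_zero hn
    rw [hγ k, zero_mul]

end PowerSeries

section InvPowSeries

variable {ι : Type*} {N : ι → ℕ} {z : ℕ → ℝ} {i₀ : ι}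

lemma hasSum_inv_pow_antitone (hz : ∀ k, 2 ≤ k → HasSum (fun i => ((N i : ℝ) ^ k)⁻¹) (z k))
    (hN : ∀ i, N i ≠ 0) {k l : ℕ} (hk : 2 ≤ k) (hkl : k ≤ l) : z l ≤ z k :=
  hasSum_le
    (fun i => inv_pow_le_inv_pow_of_le (by exact_mod_cast Nat.one_le_iff_ne_zero.mpr (hN i)) hkl)
    (hz l (hk.trans hkl)) (hz k hk)

lemma abs_sub_div_le_of_hasSum_inv_pow
    (hz : ∀ k, 2 ≤ k → HasSum (fun i => ((N i : ℝ) ^ k)⁻¹) (z k))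
    (hN : ∀ i, N i ≠ 0) (ρ : ℝ) {m : ℕ} (hm : 1 ≤ m) : |z (m + 1) - ρ / m| ≤ z 2 + |ρ| := by
  have hz₀ : 0 ≤ z (m + 1) := (hz _ (by omega)).nonneg fun _ => by positivity
  have hz₂ : z (m + 1) ≤ z 2 := hasSum_inv_pow_antitone hz hN le_rfl (by omega)
  have hρ : |ρ / m| ≤ |ρ| := by
    rw [abs_div, Nat.abs_cast]
    exact div_le_self (abs_nonneg ρ) (by exact_mod_cast hm)
  calc |z (m + 1) - ρ / m| ≤ |z (m + 1)| + |ρ / m| := abs_sub _ _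
    _ ≤ z 2 + |ρ| := by rw [abs_of_nonneg hz₀]; linarith

lemma two_pow_mul_sub_le_of_hasSum_inv_pow
    (hz : ∀ k, 2 ≤ k → HasSum (fun i => ((N i : ℝ) ^ k)⁻¹) (z k))
    (hi₀ : N i₀ = 1) (hN : ∀ i, i ≠ i₀ → 2 ≤ N i) {k : ℕ} (hk : 2 ≤ k) (j : ℕ) :
    2 ^ j * z (k + j) - z k ≤ 2 ^ j - 1 := by
  classical
  refine hasSum_le (fun i => ?_) (((hz _ (by omega)).mul_left (2 ^ j)).sub (hz k hk))
    (hasSum_ite_eq i₀ ((2 : ℝ) ^ j - 1))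
  by_cases hi : i = i₀
  · simp [hi, hi₀]
  · have h2 : (2 : ℝ) ≤ N i := by exact_mod_cast hN i hi
    have hpos : (0 : ℝ) < (N i : ℝ) ^ k := by positivity
    rw [if_neg hi, sub_nonpos, pow_add, mul_inv, ← mul_assoc, mul_comm _ ((N i : ℝ) ^ k)⁻¹,
      mul_assoc]
    refine mul_le_of_le_one_right (inv_nonneg.mpr hpos.le) ?_
    rw [← div_eq_mul_inv, div_le_one (by positivity)]
    exact pow_le_pow_left₀ zero_le_two h2 j

lemma one_lt_of_hasSum_inv_pow (hz : ∀ k, 2 ≤ k → HasSum (fun i => ((N i : ℝ) ^ k)⁻¹) (z k))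
    (hi₀ : N i₀ = 1) {i₁ : ι} (hi₁ : i₁ ≠ i₀) (hN₁ : N i₁ ≠ 0) {k : ℕ} (hk : 2 ≤ k) : 1 < z k := by
  classical
  have h := sum_le_hasSum {i₀, i₁} (fun i _ => by positivity) (hz k hk)
  rw [Finset.sum_pair hi₁.symm, hi₀] at h
  have : (0 : ℝ) < ((N i₁ : ℝ) ^ k)⁻¹ := by positivity
  simp only [Nat.cast_one, one_pow, inv_one] at h
  linarith

-- At `m = 1, 4, 7` the values `c + ρ / m` satisfy `8 z 5 - z 2 = 7 z 8`, whereas the series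
-- gives `8 z 5 - z 2 ≤ 7 < 7 z 8`.
lemma not_forall_eq_add_div_of_hasSum_inv_pow
    (hz : ∀ k, 2 ≤ k → HasSum (fun i => ((N i : ℝ) ^ k)⁻¹) (z k))
    (hi₀ : N i₀ = 1) (hN : ∀ i, i ≠ i₀ → 2 ≤ N i) {i₁ : ι} (hi₁ : i₁ ≠ i₀) (c ρ : ℝ) :
    ¬ ∀ m : ℕ, 1 ≤ m → z (m + 1) = c + ρ / m := by
  intro h
  have hdecay := two_pow_mul_sub_le_of_hasSum_inv_pow hz hi₀ hN le_rfl 3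
  have hz₈ := one_lt_of_hasSum_inv_pow hz hi₀ hi₁ (by linarith [hN i₁ hi₁]) (k := 8) (by norm_num)
  have h₂ := h 1 le_rfl
  have h₅ := h 4 (by norm_num)
  have h₈ := h 7 (by norm_num)
  norm_num at hdecay h₂ h₅ h₈
  linarith

end InvPowSeries

lemma Ideal.two_le_absNorm {S : Type*} [CommRing S] [IsDedekindDomain S] [Module.Free ℤ S]
    [Module.Finite ℤ S] {I : Ideal S} (hI₀ : I ≠ ⊥) (hI₁ : I ≠ ⊤) : 2 ≤ Ideal.absNorm I := by
  have h₀ : Ideal.absNorm I ≠ 0 := mt Ideal.absNorm_eq_zero_iff.mp hI₀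
  have h₁ : Ideal.absNorm I ≠ 1 := mt Ideal.absNorm_eq_one_iff.mp hI₁
  omega

lemma hasSum_re_inv_natCast_pow {ι : Type*} {N : ι → ℕ} {w : ℂ} {k : ℕ}
    (h : HasSum (fun i => (N i : ℂ) ^ (-(k : ℂ))) w) :
    HasSum (fun i => ((N i : ℝ) ^ k)⁻¹) w.re := by
  convert Complex.hasSum_re h using 2 with i
  rw [Complex.cpow_neg, Complex.cpow_natCast, ← Complex.ofReal_natCast, ← Complex.ofReal_pow,
    ← Complex.ofReal_inv, Complex.ofReal_re]

/-- Infinitely many of the constants `γ_n(K)` are positive and infinitely many negative. -/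
theorem dedekind_stieltjes_sign_changes (K : Type*) [Field K] [NumberField K]
    (ρ : ℝ) (Z : ℂ → ℂ) (γ : ℕ → ℝ)
    (hZ : ∀ s : ℂ, 1 < s.re →
      HasSum (fun I : {I : Ideal (𝓞 K) // I ≠ ⊥} =>
        (Ideal.absNorm I.1 : ℂ) ^ (-s)) (Z s))
    (hγ : ∀ s : ℂ, s ≠ 1 →
      HasSum (fun n : ℕ => (γ n : ℂ) * (s - 1) ^ n) (Z s - (ρ : ℂ) / (s - 1))) :
    {n : ℕ | 0 < γ n}.Infinite ∧ {n : ℕ | γ n < 0}.Infinite := by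
  set z : ℕ → ℝ := fun k => (Z k).re
  have hz (k : ℕ) (hk : 2 ≤ k) : HasSum (fun I : {I : Ideal (𝓞 K) // I ≠ ⊥} =>
      ((Ideal.absNorm I.1 : ℝ) ^ k)⁻¹) (z k) :=
    hasSum_re_inv_natCast_pow (hZ k (by rw [Complex.natCast_re]; exact_mod_cast hk))
  have hser (m : ℕ) (hm : 1 ≤ m) :
      HasSum (fun n => γ n * (m : ℝ) ^ n) (z (m + 1) - ρ / m) := by
    have hne : ((m + 1 : ℕ) : ℂ) ≠ 1 := by exact_mod_cast (show m + 1 ≠ 1 by omega)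
    convert Complex.hasSum_re (hγ _ hne) using 1
    · funext n
      simp [← Complex.ofReal_natCast, ← Complex.ofReal_pow, ← Complex.ofReal_mul]
    · simp [z, ← Complex.ofReal_natCast, ← Complex.ofReal_div]
  have hnonconst : ∃ n, γ (n + 1) ≠ 0 := by
    by_contra! h
    obtain ⟨P, hP₀, hP₁⟩ :=
      Ring.not_isField_iff_exists_ideal_bot_lt_and_lt_top.mp (RingOfIntegers.not_isField K)
    refine not_forall_eq_add_div_of_hasSum_inv_pow hz (i₀ := ⟨⊤, top_ne_bot⟩) (by simp)
      (fun I hI => Ideal.two_le_absNorm I.2 fun hI' => hI (Subtype.ext hI')) (i₁ := ⟨P, hP₀.ne'⟩)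
      (fun hP => hP₁.ne (congrArg Subtype.val hP)) (γ 0) ρ fun m hm => ?_
    linarith [(hser m hm).unique (hasSum_mul_pow_of_coeff_succ_eq_zero h m)]
  obtain ⟨hpos, hneg⟩ := frequently_pos_and_frequently_neg_coeff hser
    (fun m => abs_sub_div_le_of_hasSum_inv_pow hz (fun I => mt Ideal.absNorm_eq_zero_iff.mp I.2) ρ)
    hnonconst
  exact ⟨Nat.frequently_atTop_iff_infinite.mp hpos, Nat.frequently_atTop_iff_infinite.mp hneg⟩
end

section
/- Let K be a number field of degree m with residue ρ of ζ_K at s = 1. Then the function h(s) = ζ_K(s) − ρs/(s−1) extends holomorphically to Re(s) > 1 − 1/m and equals s ∫_1^∞ (N_K(t) − ρt) t^{−s−1} dt there. -/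
open Filter NumberField MeasureTheory

/-!
Since `N(I)^{-s} = s ∫_{N(I)}^∞ t^{-s-1} dt`, summing over the nonzero ideals and exchanging sum
and integral (absolute convergence for `Re s > 1`) gives `ζ_K(s) = s ∫_1^∞ N_K(t) t^{-s-1} dt`.
Subtracting `s ∫_1^∞ ρ t · t^{-s-1} dt = ρ s / (s - 1)` gives the integral formula for `h`
when `Re s > 1`. That integral is the Mellin transform at `-s` of `N_K(t) - ρ t` cut off to
`t > 1`, a function that vanishes near `0` and is `O(t^{1-1/m})` at infinity by Landau's
estimate, so it is holomorphic on `Re s > 1 - 1/m`.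
-/

open Set Asymptotics Topology

lemma Ioi_inter_Ici_ae_eq_Ioi {b x : ℝ} (hbx : b ≤ x) :
    (Ioi b ∩ Ici x : Set ℝ) =ᵐ[volume] Ioi x :=
  ((ae_eq_refl (Ioi b)).inter Ioi_ae_eq_Ici.symm).trans
    (.of_eq (by rw [Ioi_inter_Ioi, max_eq_right hbx]))

lemma setIntegral_Ioi_indicator_Ici {E : Type*} [NormedAddCommGroup E] [NormedSpace ℝ E]
    {b x : ℝ} (hbx : b ≤ x) (g : ℝ → E) :
    ∫ t in Ioi b, (Ici x).indicator g t = ∫ t in Ioi x, g t := by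
  rw [setIntegral_indicator measurableSet_Ici]
  exact setIntegral_congr_set (Ioi_inter_Ici_ae_eq_Ioi hbx)

lemma integrableOn_Ioi_indicator_Ici {E : Type*} [NormedAddCommGroup E]
    {b x : ℝ} (hbx : b ≤ x) {g : ℝ → E} (hg : IntegrableOn g (Ioi x)) :
    IntegrableOn ((Ici x).indicator g) (Ioi b) := by
  rw [IntegrableOn, integrable_indicator_iff measurableSet_Ici, IntegrableOn,
    Measure.restrict_restrict measurableSet_Ici, inter_comm]
  exact hg.congr_set_ae (Ioi_inter_Ici_ae_eq_Ioi hbx)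

lemma re_neg_sub_one_lt {s : ℂ} (hs : 0 < s.re) : (-s - 1).re < -1 := by
  rw [Complex.sub_re, Complex.neg_re, Complex.one_re]
  linarith

lemma integral_Ioi_cpow_neg_sub_one {x : ℝ} (hx : 0 < x) {s : ℂ} (hs : 0 < s.re) :
    ∫ t in Ioi x, (t : ℂ) ^ (-s - 1) = (x : ℂ) ^ (-s) / s := by
  rw [integral_Ioi_cpow_of_lt (re_neg_sub_one_lt hs) hx, sub_add_cancel, neg_div_neg_eq]

lemma integral_Ioi_norm_cpow_neg_sub_one {x : ℝ} (hx : 0 < x) {s : ℂ} (hs : 0 < s.re) :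
    ∫ t in Ioi x, ‖(t : ℂ) ^ (-s - 1)‖ = x ^ (-s.re) / s.re := by
  rw [setIntegral_congr_fun measurableSet_Ioi
    fun t ht => Complex.norm_cpow_eq_rpow_re_of_pos (hx.trans ht) _]
  rw [integral_Ioi_rpow_of_lt (re_neg_sub_one_lt hs) hx]
  simp only [Complex.sub_re, Complex.neg_re, Complex.one_re, sub_add_cancel, neg_div_neg_eq]

lemma ofReal_mul_cpow_neg_sub_one {t : ℝ} (ht : t ≠ 0) (s : ℂ) :
    (t : ℂ) * (t : ℂ) ^ (-s - 1) = (t : ℂ) ^ (-s) := by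
  rw [Complex.cpow_sub _ _ (Complex.ofReal_ne_zero.mpr ht), Complex.cpow_one,
    mul_div_cancel₀ _ (Complex.ofReal_ne_zero.mpr ht)]

lemma integrableOn_Ioi_one_ofReal_mul_cpow_neg_sub_one {s : ℂ} (hs : 1 < s.re) :
    IntegrableOn (fun t : ℝ => (t : ℂ) * (t : ℂ) ^ (-s - 1)) (Ioi 1) :=
  (integrableOn_Ioi_cpow_of_lt (by simpa using hs) zero_lt_one).congr_fun
    (fun t ht => (ofReal_mul_cpow_neg_sub_one (zero_lt_one.trans ht).ne' s).symm) measurableSet_Ioi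

lemma integral_Ioi_one_ofReal_mul_cpow_neg_sub_one {s : ℂ} (hs : 1 < s.re) :
    ∫ t : ℝ in Ioi 1, (t : ℂ) * (t : ℂ) ^ (-s - 1) = 1 / (s - 1) := by
  rw [setIntegral_congr_fun measurableSet_Ioi
      fun t ht => ofReal_mul_cpow_neg_sub_one (zero_lt_one.trans ht).ne' s,
    integral_Ioi_cpow_of_lt (by simpa using hs) zero_lt_one, Complex.ofReal_one, Complex.one_cpow,
    show -s + 1 = -(s - 1) by ring, neg_div_neg_eq]

section SublevelCount

variable {ι : Type*} (a : ι → ℝ)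

/-- `Nat.card` is `0` on infinite types, so this is only meaningful when the sublevel sets of `a`
are finite. -/
noncomputable def sublevelCount (t : ℝ) : ℕ := Nat.card {i // a i ≤ t}

variable {a}

lemma finite_setOf_le_of_summable_rpow_neg (ha : ∀ i, 0 < a i) {σ : ℝ} (hσ : 0 ≤ σ)
    (hsum : Summable fun i => a i ^ (-σ)) (t : ℝ) : {i | a i ≤ t}.Finite := by
  rcases le_or_gt t 0 with ht | ht
  · convert finite_empty
    exact eq_empty_of_forall_notMem fun i hi => (ha i).not_ge (le_trans hi ht)
  · refine (Filter.eventually_cofinite.mp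
      (hsum.tendsto_cofinite_zero.eventually (gt_mem_nhds (Real.rpow_pos_of_pos ht (-σ))))).subset
      fun i hi => not_lt.mpr ?_
    exact Real.rpow_le_rpow_of_nonpos (ha i) hi (neg_nonpos.mpr hσ)

lemma sublevelCount_mono (hfin : ∀ t, {i | a i ≤ t}.Finite) : Monotone (sublevelCount a) :=
  fun _ t hst => Nat.card_mono (hfin t) fun _ hi => le_trans hi hst

lemma tsum_indicator_Ici_eq_sublevelCount_smul {M : Type*} [AddCommMonoid M] [TopologicalSpace M]
    {t : ℝ} (hfin : {i | a i ≤ t}.Finite) (g : ℝ → M) :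
    ∑' i, (Ici (a i)).indicator g t = sublevelCount a t • g t := by
  classical
  rw [tsum_eq_sum (s := hfin.toFinset) fun i hi => indicator_of_notMem (by simpa using hi) g]
  rw [Finset.sum_congr rfl fun i hi => indicator_of_mem (by simpa using hi) g, Finset.sum_const,
    sublevelCount]
  exact congrArg (· • g t) (Nat.card_eq_card_finite_toFinset hfin).symm

theorem hasSum_cpow_neg_eq_mul_integral_sublevelCount (ha : ∀ i, 1 ≤ a i) {s : ℂ}
    (hs : 0 < s.re) (hsum : Summable fun i => a i ^ (-s.re)) :
    HasSum (fun i => (a i : ℂ) ^ (-s))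
      (s * ∫ t in Ioi 1, ((sublevelCount a t : ℝ) : ℂ) * (t : ℂ) ^ (-s - 1)) := by
  have ha0 : ∀ i, 0 < a i := fun i => zero_lt_one.trans_le (ha i)
  have hfin := finite_setOf_le_of_summable_rpow_neg ha0 hs.le hsum
  have : Countable ι := by
    rw [← countable_univ_iff, ← iUnion_eq_univ_iff.mpr fun i => exists_nat_ge (a i)]
    exact countable_iUnion fun n => (hfin n).countable
  set F : ι → ℝ → ℂ := fun i => (Ici (a i)).indicator fun t => (t : ℂ) ^ (-s - 1)
  have hF_int (i : ι) : IntegrableOn (F i) (Ioi 1) :=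
    integrableOn_Ioi_indicator_Ici (ha i)
      (integrableOn_Ioi_cpow_of_lt (re_neg_sub_one_lt hs) (ha0 i))
  have hF_norm (i : ι) : ∫ t in Ioi 1, ‖F i t‖ = a i ^ (-s.re) / s.re := by
    simp only [F, norm_indicator_eq_indicator_norm]
    rw [setIntegral_Ioi_indicator_Ici (ha i), integral_Ioi_norm_cpow_neg_sub_one (ha0 i) hs]
  have key := hasSum_integral_of_summable_integral_norm hF_int
    ((hsum.div_const s.re).congr fun i => (hF_norm i).symm)
  simp only [F, setIntegral_Ioi_indicator_Ici (ha _), integral_Ioi_cpow_neg_sub_one (ha0 _) hs,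
    tsum_indicator_Ici_eq_sublevelCount_smul (hfin _), nsmul_eq_mul,
    ← Complex.ofReal_natCast] at key
  have hs0 : s ≠ 0 := by rintro rfl; norm_num at hs
  rw [show (fun i => (a i : ℂ) ^ (-s)) = fun i => s * ((a i : ℂ) ^ (-s) / s) from
    funext fun i => (mul_div_cancel₀ _ hs0).symm]
  exact key.mul_left s

theorem hasSum_cpow_neg_eq_mul_integral_sublevelCount_sub (ha : ∀ i, 1 ≤ a i) {s : ℂ}
    (hs : 1 < s.re) (hsum : Summable fun i => a i ^ (-s.re)) (ρ : ℂ)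
    (hint : IntegrableOn
      (fun t : ℝ => (((sublevelCount a t : ℝ) : ℂ) - ρ * t) * (t : ℂ) ^ (-s - 1))
      (Ioi 1)) :
    HasSum (fun i => (a i : ℂ) ^ (-s))
      (s * (∫ t in Ioi 1, (((sublevelCount a t : ℝ) : ℂ) - ρ * t) * (t : ℂ) ^ (-s - 1)) +
        ρ * s / (s - 1)) := by
  have hsplit : ∫ t in Ioi 1, ((sublevelCount a t : ℝ) : ℂ) * (t : ℂ) ^ (-s - 1) =
      (∫ t in Ioi 1, (((sublevelCount a t : ℝ) : ℂ) - ρ * t) * (t : ℂ) ^ (-s - 1)) +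
        ρ * ∫ t : ℝ in Ioi 1, (t : ℂ) * (t : ℂ) ^ (-s - 1) := by
    rw [← integral_const_mul, ← integral_add hint
      ((integrableOn_Ioi_one_ofReal_mul_cpow_neg_sub_one hs).const_mul ρ)]
    congr 1 with t
    ring
  convert hasSum_cpow_neg_eq_mul_integral_sublevelCount ha (by linarith) hsum using 1
  rw [hsplit, integral_Ioi_one_ofReal_mul_cpow_neg_sub_one hs]
  ring

end SublevelCount

section MellinOfTail

lemma mellin_indicator_Ioi_one (g : ℝ → ℂ) (s : ℂ) :
    mellin ((Ioi 1).indicator g) s = ∫ t in Ioi 1, g t * (t : ℂ) ^ (s - 1) := by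
  rw [mellin, ← integral_indicator measurableSet_Ioi, ← integral_indicator measurableSet_Ioi]
  congr 1 with t
  by_cases ht : t ∈ Ioi (1 : ℝ)
  · have ht0 : t ∈ Ioi (0 : ℝ) := show (0 : ℝ) < t from zero_lt_one.trans ht
    simp only [indicator_of_mem ht, indicator_of_mem ht0, smul_eq_mul, mul_comm]
  · by_cases ht0 : t ∈ Ioi (0 : ℝ)
    · simp only [indicator_of_mem ht0, indicator_of_notMem ht, smul_zero]
    · simp only [indicator_of_notMem ht0, indicator_of_notMem ht]

lemma indicator_Ioi_one_isBigO_nhdsGT_zero (g : ℝ → ℂ) (b : ℝ) :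
    (Ioi 1).indicator g =O[𝓝[>] 0] (· ^ b) := by
  refine EventuallyEq.trans_isBigO ?_ (isBigO_zero _ _)
  filter_upwards [Ioo_mem_nhdsGT zero_lt_one] with t ht
  exact indicator_of_notMem (not_lt.mpr ht.2.le) _

variable {g : ℝ → ℂ} {C e : ℝ}

lemma locallyIntegrableOn_indicator_Ioi_one
    (hg : AEStronglyMeasurable g (volume.restrict (Ioi 1)))
    (hbound : ∀ t > 1, ‖g t‖ ≤ C * t ^ e) :
    LocallyIntegrableOn ((Ioi 1).indicator g) (Ioi 0) := by
  have hcont : ContinuousOn (fun t : ℝ => C * t ^ e) (Ioi 0) := fun t ht =>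
    (continuousAt_const.mul
      (Real.continuousAt_rpow_const _ _ (Or.inl (ne_of_gt ht)))).continuousWithinAt
  refine (hcont.locallyIntegrableOn measurableSet_Ioi).mono
    ((aestronglyMeasurable_indicator_iff measurableSet_Ioi).mpr hg) (ae_of_all _ fun t => ?_)
  by_cases ht : t ∈ Ioi (1 : ℝ)
  · rw [indicator_of_mem ht]
    exact (hbound t ht).trans (Real.le_norm_self _)
  · rw [indicator_of_notMem ht, norm_zero]
    exact norm_nonneg _

lemma indicator_Ioi_one_isBigO_atTop (hbound : ∀ t > 1, ‖g t‖ ≤ C * t ^ e) :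
    (Ioi 1).indicator g =O[atTop] (· ^ e) := by
  refine isBigO_iff.mpr ⟨C, ?_⟩
  filter_upwards [eventually_gt_atTop 1] with t ht
  rw [indicator_of_mem (mem_Ioi.mpr ht), Real.norm_of_nonneg (by positivity)]
  exact hbound t ht

theorem mellinConvergent_and_differentiableAt_indicator_Ioi_one
    (hg : AEStronglyMeasurable g (volume.restrict (Ioi 1)))
    (hbound : ∀ t > 1, ‖g t‖ ≤ C * t ^ e) {s : ℂ} (hs : s.re < -e) :
    MellinConvergent ((Ioi 1).indicator g) s ∧
      DifferentiableAt ℂ (mellin ((Ioi 1).indicator g)) s := by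
  have htop : (Ioi 1).indicator g =O[atTop] (· ^ (-(-e))) := by
    simpa only [neg_neg] using indicator_Ioi_one_isBigO_atTop hbound
  have hloc := locallyIntegrableOn_indicator_Ioi_one hg hbound
  have hbot := indicator_Ioi_one_isBigO_nhdsGT_zero g (-(s.re - 1))
  exact ⟨mellinConvergent_of_isBigO_rpow hloc htop hs hbot (by linarith),
    mellin_differentiableAt_of_isBigO_rpow hloc htop hs hbot (by linarith)⟩

theorem integrableOn_Ioi_one_mul_cpow_of_norm_le
    (hg : AEStronglyMeasurable g (volume.restrict (Ioi 1)))
    (hbound : ∀ t > 1, ‖g t‖ ≤ C * t ^ e) {s : ℂ} (hs : e < s.re) :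
    IntegrableOn (fun t : ℝ => g t * (t : ℂ) ^ (-s - 1)) (Ioi 1) := by
  have hconv := (mellinConvergent_and_differentiableAt_indicator_Ioi_one hg hbound (s := -s)
    (by rw [Complex.neg_re]; linarith)).1
  refine (hconv.mono_set (Ioi_subset_Ioi zero_le_one)).congr_fun (fun t ht => ?_) measurableSet_Ioi
  simp only [indicator_of_mem ht, smul_eq_mul, mul_comm]

theorem differentiableAt_integral_Ioi_one_mul_cpow_of_norm_le
    (hg : AEStronglyMeasurable g (volume.restrict (Ioi 1)))
    (hbound : ∀ t > 1, ‖g t‖ ≤ C * t ^ e) {s : ℂ} (hs : e < s.re) :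
    DifferentiableAt ℂ (fun s : ℂ => ∫ t in Ioi 1, g t * (t : ℂ) ^ (-s - 1)) s := by
  have hdiff := (mellinConvergent_and_differentiableAt_indicator_Ioi_one hg hbound (s := -s)
    (by rw [Complex.neg_re]; linarith)).2
  simpa only [Function.comp_def, mellin_indicator_Ioi_one] using
    hdiff.comp s differentiableAt_id.neg

end MellinOfTail

lemma one_le_absNorm {K : Type*} [Field K] [NumberField K] (I : {I : Ideal (𝓞 K) // I ≠ ⊥}) :
    1 ≤ (Ideal.absNorm I.1 : ℝ) :=
  Nat.one_le_cast.mpr (Nat.one_le_iff_ne_zero.mpr (Ideal.absNorm_eq_zero_iff.not.mpr I.2))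

/-- The function `h(s) = ζ_K(s) − ρs/(s−1)` extends holomorphically to `Re(s) > 1 − 1/m`
(`m = [K:ℚ]`) and equals `s ∫_1^∞ (N_K(t) − ρt) t^{−s−1} dt` there. -/
theorem dedekind_zeta_continuation (K : Type*) [Field K] [NumberField K]
    (ρ : ℝ) (Z : ℂ → ℂ)
    (hZ : ∀ s : ℂ, 1 < s.re →
      HasSum (fun I : {I : Ideal (𝓞 K) // I ≠ ⊥} =>
        (Ideal.absNorm I.1 : ℂ) ^ (-s)) (Z s))
    (NK : ℝ → ℝ)
    (hNK : ∀ t : ℝ, NK t =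
      (Nat.card {I : Ideal (𝓞 K) // I ≠ ⊥ ∧ (Ideal.absNorm I : ℝ) ≤ t} : ℝ))
    (hcount : ∃ C : ℝ, ∀ t : ℝ, 1 ≤ t →
      |NK t - ρ * t| ≤ C * t ^ ((1 : ℝ) - 1 / (Module.finrank ℚ K : ℝ))) :
    ∃ h : ℂ → ℂ,
      (∀ s : ℂ, 1 - 1 / (Module.finrank ℚ K : ℝ) < s.re → DifferentiableAt ℂ h s) ∧
      (∀ s : ℂ, 1 < s.re → h s = Z s - (ρ : ℂ) * s / (s - 1)) ∧
      (∀ s : ℂ, 1 - 1 / (Module.finrank ℚ K : ℝ) < s.re →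
        h s = s * ∫ t in Set.Ioi (1 : ℝ),
          ((NK t : ℂ) - (ρ : ℂ) * (t : ℂ)) * (t : ℂ) ^ (-s - 1)) := by
  obtain ⟨C, hC⟩ := hcount
  set e : ℝ := 1 - 1 / (Module.finrank ℚ K : ℝ)
  have he : e < 1 := by
    have := Module.finrank_pos (R := ℚ) (M := K)
    simp only [e, sub_lt_self_iff, one_div, inv_pos, Nat.cast_pos, this]
  set a : {I : Ideal (𝓞 K) // I ≠ ⊥} → ℝ := fun I => Ideal.absNorm I.1
  have hsum (s : ℂ) (hs : 1 < s.re) : Summable fun I => a I ^ (-s.re) := by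
    simpa only [Complex.neg_re] using (hZ s hs).summable.norm.congr fun I =>
      Complex.norm_natCast_cpow_of_re_ne_zero _ (by rw [Complex.neg_re]; linarith)
  have hNK_eq (t : ℝ) : (sublevelCount a t : ℝ) = NK t := by
    rw [hNK, sublevelCount]
    exact congrArg Nat.cast <| Nat.card_congr <| Equiv.subtypeSubtypeEquivSubtypeInter
      (fun I : Ideal (𝓞 K) => I ≠ ⊥) fun I => (Ideal.absNorm I : ℝ) ≤ t
  have hfin := finite_setOf_le_of_summable_rpow_neg
    (fun I => zero_lt_one.trans_le (one_le_absNorm I)) (by norm_num) (hsum 2 (by norm_num))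
  have hmono : Monotone NK := fun x y hxy => by
    rw [← hNK_eq, ← hNK_eq]
    exact Nat.mono_cast (sublevelCount_mono hfin hxy)
  set g : ℝ → ℂ := fun t => (NK t : ℂ) - (ρ : ℂ) * (t : ℂ)
  have hg : AEStronglyMeasurable g (volume.restrict (Ioi 1)) :=
    ((Complex.measurable_ofReal.comp hmono.measurable).sub
      (measurable_const.mul Complex.measurable_ofReal)).aestronglyMeasurable
  have hbound (t : ℝ) (ht : t > 1) : ‖g t‖ ≤ C * t ^ e := by
    simpa [g, ← Complex.ofReal_mul, ← Complex.ofReal_sub] using hC t ht.le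
  refine ⟨fun s => s * ∫ t in Ioi 1, g t * (t : ℂ) ^ (-s - 1),
    fun s hs => differentiableAt_id.mul
      (differentiableAt_integral_Ioi_one_mul_cpow_of_norm_le hg hbound hs),
    fun s hs => ?_, fun s _ => rfl⟩
  have hint := integrableOn_Ioi_one_mul_cpow_of_norm_le hg hbound (he.trans hs)
  simp only [g, ← hNK_eq] at hint ⊢
  rw [(hZ s hs).unique
    (hasSum_cpow_neg_eq_mul_integral_sublevelCount_sub one_le_absNorm hs (hsum s hs) ρ hint)]
  ring
end
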